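/- arXiv:1610.01978 — 12 statements merged into one kernel-verified Lean document; each statement's English description precedes it below -/
import Mathlib

section
/- If P is a contraction on a Hilbert space H and Y is a bounded operator on H satisfying D_P Y* D_P = P*ⁿ D_P Y* D_P Pⁿ for all n ≥ 1, then D_P Y* D_P = 0. -/
open ContinuousLinearMap Filter

variable {H : Type*} [NormedAddCommGroup H] [InnerProductSpace ℂ H] [CompleteSpace H]

/-- If `D Y* D = P*ⁿ (D Y* D) Pⁿ` for all `n ≥ 1`, where `P` is a contraction with
defect operator `D`, then `D Y* D = 0`. -/
theorem stmt1 (P D Y : H →L[ℂ] H) (hP : ‖P‖ ≤ 1) (hD : D.IsPositive)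
    (hD2 : D * D = 1 - adjoint P * P)
    (hiter : ∀ n : ℕ, 1 ≤ n →
      D * adjoint Y * D = (adjoint P) ^ n * (D * adjoint Y * D) * P ^ n) :
    D * adjoint Y * D = 0 := by
  have hDsa : adjoint D = D := hD.isSelfAdjoint.adjoint_eq
  -- key norm identity
  have key : ∀ x : H, ‖D x‖ ^ 2 = ‖x‖ ^ 2 - ‖P x‖ ^ 2 := by
    intro x
    have h1 : (inner ℂ (D x) (D x) : ℂ) = inner ℂ x ((D * D) x) := by
      nth_rewrite 1 [← hDsa]
      rw [adjoint_inner_left, ContinuousLinearMap.mul_apply]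
    rw [hD2] at h1
    have h2 : (inner ℂ (D x) (D x) : ℂ) = inner ℂ x x - inner ℂ (P x) (P x) := by
      rw [h1]
      simp [sub_apply, one_apply, mul_apply, inner_sub_right, adjoint_inner_right]
    have h3 : ((‖D x‖ ^ 2 : ℝ) : ℂ) = ((‖x‖ ^ 2 - ‖P x‖ ^ 2 : ℝ) : ℂ) := by
      push_cast
      simpa [inner_self_eq_norm_sq_to_K] using h2
    exact_mod_cast h3
  -- ‖D (P^n h)‖ → 0
  have tendD : ∀ h : H, Tendsto (fun n : ℕ => ‖D ((P ^ n) h)‖) atTop (nhds 0) := by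
    intro h
    have hanti : Antitone (fun n : ℕ => ‖(P ^ n) h‖ ^ 2) := by
      apply antitone_nat_of_succ_le
      intro n
      have h1 : (P ^ (n + 1)) h = P ((P ^ n) h) := by
        rw [pow_succ']; rfl
      have h2 : ‖(P ^ (n + 1)) h‖ ≤ ‖(P ^ n) h‖ := by
        rw [h1]
        calc ‖P ((P ^ n) h)‖ ≤ ‖P‖ * ‖(P ^ n) h‖ := le_opNorm _ _
          _ ≤ 1 * ‖(P ^ n) h‖ := by gcongr
          _ = ‖(P ^ n) h‖ := one_mul _
      exact pow_le_pow_left₀ (norm_nonneg _) h2 2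
    have hbdd : BddBelow (Set.range fun n : ℕ => ‖(P ^ n) h‖ ^ 2) :=
      ⟨0, by rintro x ⟨n, rfl⟩; positivity⟩
    have hL : Tendsto (fun n : ℕ => ‖(P ^ n) h‖ ^ 2) atTop
        (nhds (⨅ n : ℕ, ‖(P ^ n) h‖ ^ 2)) := tendsto_atTop_ciInf hanti hbdd
    have hL' : Tendsto (fun n : ℕ => ‖(P ^ (n + 1)) h‖ ^ 2) atTop
        (nhds (⨅ n : ℕ, ‖(P ^ n) h‖ ^ 2)) := hL.comp (tendsto_add_atTop_nat 1)
    have hdiff : Tendsto (fun n : ℕ => ‖(P ^ n) h‖ ^ 2 - ‖(P ^ (n + 1)) h‖ ^ 2)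
        atTop (nhds 0) := by
      simpa using hL.sub hL'
    have hsqeq : (fun n : ℕ => ‖D ((P ^ n) h)‖ ^ 2)
        = fun n : ℕ => ‖(P ^ n) h‖ ^ 2 - ‖(P ^ (n + 1)) h‖ ^ 2 := by
      funext n
      rw [key ((P ^ n) h)]
      congr 2
      rw [pow_succ']; rfl
    have hsq : Tendsto (fun n : ℕ => ‖D ((P ^ n) h)‖ ^ 2) atTop (nhds 0) := by
      rw [hsqeq]; exact hdiff
    have := (Real.continuous_sqrt.tendsto 0).comp hsq
    simpa [Real.sqrt_sq (norm_nonneg _), Function.comp_def] using this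
  -- conclude
  ext h0
  have hzero : ∀ g : H, (inner ℂ g ((D * adjoint Y * D) h0) : ℂ) = 0 := by
    intro g
    set C : ℝ := ‖g‖ * (‖D‖ * ‖adjoint Y‖) with hC
    have bound : ∀ n : ℕ, 1 ≤ n →
        ‖(inner ℂ g ((D * adjoint Y * D) h0) : ℂ)‖ ≤ C * ‖D ((P ^ n) h0)‖ := by
      intro n hn
      have hadj : (adjoint P) ^ n = adjoint (P ^ n) := by
        rw [← star_eq_adjoint, ← star_eq_adjoint, ← star_pow]
      have heq : (inner ℂ g ((D * adjoint Y * D) h0) : ℂ)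
          = inner ℂ ((P ^ n) g) ((D * adjoint Y * D) ((P ^ n) h0)) := by
        conv_lhs => rw [hiter n hn]
        rw [ContinuousLinearMap.mul_apply, ContinuousLinearMap.mul_apply, hadj, adjoint_inner_right]
      rw [heq]
      have hPn : ‖(P ^ n) g‖ ≤ ‖g‖ := by
        calc ‖(P ^ n) g‖ ≤ ‖P ^ n‖ * ‖g‖ := le_opNorm _ _
          _ ≤ 1 * ‖g‖ := by
              gcongr
              calc ‖P ^ n‖ ≤ ‖P‖ ^ n := norm_pow_le' _ (by omega)
                _ ≤ 1 ^ n := pow_le_pow_left₀ (norm_nonneg _) hP n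
                _ = 1 := one_pow n
          _ = ‖g‖ := one_mul _
      calc ‖(inner ℂ ((P ^ n) g) ((D * adjoint Y * D) ((P ^ n) h0)) : ℂ)‖
          ≤ ‖(P ^ n) g‖ * ‖(D * adjoint Y * D) ((P ^ n) h0)‖ := norm_inner_le_norm _ _
        _ ≤ ‖g‖ * (‖D‖ * (‖adjoint Y‖ * ‖D ((P ^ n) h0)‖)) := by
            gcongr
            rw [ContinuousLinearMap.mul_apply, ContinuousLinearMap.mul_apply]
            calc ‖D ((adjoint Y) (D ((P ^ n) h0)))‖
                ≤ ‖D‖ * ‖(adjoint Y) (D ((P ^ n) h0))‖ := le_opNorm _ _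
              _ ≤ ‖D‖ * (‖adjoint Y‖ * ‖D ((P ^ n) h0)‖) := by gcongr; exact le_opNorm _ _
        _ = C * ‖D ((P ^ n) h0)‖ := by rw [hC]; ring
    have htend : Tendsto (fun n : ℕ => C * ‖D ((P ^ n) h0)‖) atTop (nhds 0) := by
      simpa using (tendD h0).const_mul C
    have hle : ‖(inner ℂ g ((D * adjoint Y * D) h0) : ℂ)‖ ≤ 0 :=
      ge_of_tendsto htend (eventually_atTop.mpr ⟨1, fun n hn => bound n hn⟩)
    exact norm_eq_zero.mp (le_antisymm hle (norm_nonneg _))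
  have := hzero ((D * adjoint Y * D) h0)
  simpa [inner_self_eq_zero] using this
end

section
/- Let P be a contraction on H and let Y₁, Y₂ be bounded operators on H such that Y₁ D_P + Y₂* D_P P = 0 and Y₂ D_P + Y₁* D_P P = 0. Then D_P Y₁* D_P = 0 and D_P Y₂* D_P = 0. -/
open ContinuousLinearMap Filter

open scoped InnerProductSpace

variable {H : Type*} [NormedAddCommGroup H] [InnerProductSpace ℂ H] [CompleteSpace H]

/-- Key analytic lemma: if `X = D Y D` with `D` self-adjoint, `D² = 1 - P*P`, `‖P‖ ≤ 1`,
and `X = P* X P`, then `X = 0`. -/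
lemma aux_zero (P D Y : H →L[ℂ] H) (hP : ‖P‖ ≤ 1) (hDsa : adjoint D = D)
    (hD2 : D * D = 1 - adjoint P * P)
    (hX : D * Y * D = adjoint P * (D * Y * D) * P) :
    D * Y * D = 0 := by
  set X := D * Y * D with hXdef
  have hiter : ∀ (n : ℕ) (x : H), ⟪X x, x⟫_ℂ = ⟪X ((P ^ n) x), (P ^ n) x⟫_ℂ := by
    intro n
    induction n with
    | zero => intro x; simp
    | succ n ih =>
      intro x
      have step : ∀ y : H, ⟪X y, y⟫_ℂ = ⟪X (P y), P y⟫_ℂ := by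
        intro y
        conv_lhs => rw [hX]
        have : (adjoint P * (X) * P) y = adjoint P (X (P y)) := rfl
        rw [this, adjoint_inner_left]
      have hp : (P ^ (n + 1)) x = P ((P ^ n) x) := by
        rw [pow_succ']; rfl
      rw [ih x, step ((P ^ n) x), hp]
  -- norm of D applied to anything
  have hDnorm : ∀ z : H, ‖D z‖ ^ 2 = ‖z‖ ^ 2 - ‖P z‖ ^ 2 := by
    intro z
    have h1 : ⟪D z, D z⟫_ℂ = ⟪(D * D) z, z⟫_ℂ := by
      have : (D * D) z = D (D z) := rfl
      rw [this, ← adjoint_inner_left, hDsa]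
    rw [hD2] at h1
    have h2 : ((1 : H →L[ℂ] H) - adjoint P * P) z = z - adjoint P (P z) := rfl
    rw [h2, inner_sub_left, adjoint_inner_left] at h1
    rw [inner_self_eq_norm_sq_to_K, inner_self_eq_norm_sq_to_K,
      inner_self_eq_norm_sq_to_K] at h1
    exact_mod_cast h1
  -- bound
  have hbound : ∀ z : H, ‖⟪X z, z⟫_ℂ‖ ≤ ‖Y‖ * (‖z‖ ^ 2 - ‖P z‖ ^ 2) := by
    intro z
    have hxz : X z = D (Y (D z)) := rfl
    have h1 : ⟪X z, z⟫_ℂ = ⟪Y (D z), D z⟫_ℂ := by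
      rw [hxz, ← adjoint_inner_right, hDsa]
    rw [h1]
    calc ‖⟪Y (D z), D z⟫_ℂ‖ ≤ ‖Y (D z)‖ * ‖D z‖ := norm_inner_le_norm _ _
      _ ≤ (‖Y‖ * ‖D z‖) * ‖D z‖ :=
        mul_le_mul_of_nonneg_right (le_opNorm Y (D z)) (norm_nonneg _)
      _ = ‖Y‖ * ‖D z‖ ^ 2 := by ring
      _ = ‖Y‖ * (‖z‖ ^ 2 - ‖P z‖ ^ 2) := by rw [hDnorm]
  -- now fix x and conclude inner vanishes
  have hinner : ∀ x : H, ⟪X x, x⟫_ℂ = 0 := by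
    intro x
    set a : ℕ → ℝ := fun n => ‖(P ^ n) x‖ ^ 2 with ha
    have hanti : Antitone a := by
      apply antitone_nat_of_succ_le
      intro n
      have hp : (P ^ (n + 1)) x = P ((P ^ n) x) := by rw [pow_succ']; rfl
      have : ‖(P ^ (n + 1)) x‖ ≤ ‖(P ^ n) x‖ := by
        rw [hp]
        calc ‖P ((P ^ n) x)‖ ≤ ‖P‖ * ‖(P ^ n) x‖ := le_opNorm _ _
          _ ≤ 1 * ‖(P ^ n) x‖ := mul_le_mul_of_nonneg_right hP (norm_nonneg _)
          _ = ‖(P ^ n) x‖ := one_mul _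
      exact pow_le_pow_left₀ (norm_nonneg _) this 2
    have hbdd : BddBelow (Set.range a) := ⟨0, by rintro _ ⟨n, rfl⟩; positivity⟩
    have hlim : Tendsto a atTop (nhds (⨅ n, a n)) := tendsto_atTop_ciInf hanti hbdd
    have hlim' : Tendsto (fun n => a (n + 1)) atTop (nhds (⨅ n, a n)) :=
      hlim.comp (tendsto_add_atTop_nat 1)
    have hdiff : Tendsto (fun n => ‖Y‖ * (a n - a (n + 1))) atTop (nhds 0) := by
      have := (hlim.sub hlim').const_mul ‖Y‖
      simpa using this
    have hle : ∀ n : ℕ, ‖⟪X x, x⟫_ℂ‖ ≤ ‖Y‖ * (a n - a (n + 1)) := by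
      intro n
      rw [hiter n x]
      have hp : (P ^ (n + 1)) x = P ((P ^ n) x) := by rw [pow_succ']; rfl
      have := hbound ((P ^ n) x)
      simp only [ha]
      rw [hp]
      exact this
    have : ‖⟪X x, x⟫_ℂ‖ ≤ 0 := ge_of_tendsto' hdiff hle
    have := le_antisymm this (norm_nonneg _)
    exact norm_eq_zero.mp this
  have : (X : H →ₗ[ℂ] H) = 0 := (inner_map_self_eq_zero _).mp hinner
  ext x
  exact congrFun (congrArg DFunLike.coe this) x

/-- Uniqueness step: if `Y₁ D + Y₂* D P = 0` and `Y₂ D + Y₁* D P = 0` for a contraction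
`P` with defect operator `D`, then `D Y₁* D = 0` and `D Y₂* D = 0`. -/
theorem stmt2 (P D Y₁ Y₂ : H →L[ℂ] H) (hP : ‖P‖ ≤ 1) (hD : D.IsPositive)
    (hD2 : D * D = 1 - adjoint P * P)
    (h1 : Y₁ * D + adjoint Y₂ * D * P = 0)
    (h2 : Y₂ * D + adjoint Y₁ * D * P = 0) :
    D * adjoint Y₁ * D = 0 ∧ D * adjoint Y₂ * D = 0 := by
  have hDsa : adjoint D = D := hD.isSelfAdjoint.adjoint_eq
  -- adjoints of the hypotheses
  have h1' : D * adjoint Y₁ + adjoint P * D * Y₂ = 0 := by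
    have := congrArg star h1
    simp only [star_add, star_mul, star_zero, star_eq_adjoint, adjoint_adjoint] at this
    rw [hDsa] at this
    rw [← this]
    noncomm_ring
  have h2' : D * adjoint Y₂ + adjoint P * D * Y₁ = 0 := by
    have := congrArg star h2
    simp only [star_add, star_mul, star_zero, star_eq_adjoint, adjoint_adjoint] at this
    rw [hDsa] at this
    rw [← this]
    noncomm_ring
  -- fixed point identities
  have e1 : D * adjoint Y₁ * D = adjoint P * (D * adjoint Y₁ * D) * P := by
    have a1 : D * adjoint Y₁ = -(adjoint P * D * Y₂) := eq_neg_of_add_eq_zero_left h1'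
    have a2 : Y₂ * D = -(adjoint Y₁ * D * P) := eq_neg_of_add_eq_zero_left h2
    calc D * adjoint Y₁ * D = -(adjoint P * D * Y₂) * D := by rw [a1]
      _ = -(adjoint P * D * (Y₂ * D)) := by noncomm_ring
      _ = -(adjoint P * D * (-(adjoint Y₁ * D * P))) := by rw [a2]
      _ = adjoint P * (D * adjoint Y₁ * D) * P := by noncomm_ring
  have e2 : D * adjoint Y₂ * D = adjoint P * (D * adjoint Y₂ * D) * P := by
    have a1 : D * adjoint Y₂ = -(adjoint P * D * Y₁) := eq_neg_of_add_eq_zero_left h2'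
    have a2 : Y₁ * D = -(adjoint Y₂ * D * P) := eq_neg_of_add_eq_zero_left h1
    calc D * adjoint Y₂ * D = -(adjoint P * D * Y₁) * D := by rw [a1]
      _ = -(adjoint P * D * (Y₁ * D)) := by noncomm_ring
      _ = -(adjoint P * D * (-(adjoint Y₂ * D * P))) := by rw [a2]
      _ = adjoint P * (D * adjoint Y₂ * D) * P := by noncomm_ring
  exact ⟨aux_zero P D (adjoint Y₁) hP hDsa hD2 e1,
         aux_zero P D (adjoint Y₂) hP hDsa hD2 e2⟩
end

section
/- Let (S₁, S₂, P) be commuting bounded operators on a Hilbert space H with ‖P‖ ≤ 1, and let A₁, A₂ be bounded operators satisfying S₁ - S₂*P = D_P A₁ D_P and S₂ - S₁*P = D_P A₂ D_P. Then D_P (A₁ D_P + A₂* D_P P) = D_P² S₁ and D_P (A₂ D_P + A₁* D_P P) = D_P² S₂. -/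
open ContinuousLinearMap Filter

variable {H : Type*} [NormedAddCommGroup H] [InnerProductSpace ℂ H] [CompleteSpace H]

/-- If `(A₁, A₂)` satisfies the fundamental equations of the commuting triple
`(S₁, S₂, P)`, then `D(A₁ D + A₂* D P) = D² S₁` and `D(A₂ D + A₁* D P) = D² S₂`. -/
theorem stmt3 (S₁ S₂ P D A₁ A₂ : H →L[ℂ] H)
    (hc12 : S₁ * S₂ = S₂ * S₁) (hc1P : S₁ * P = P * S₁) (hc2P : S₂ * P = P * S₂)
    (hP : ‖P‖ ≤ 1) (hD : D.IsPositive) (hD2 : D * D = 1 - adjoint P * P)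
    (hA1 : S₁ - adjoint S₂ * P = D * A₁ * D)
    (hA2 : S₂ - adjoint S₁ * P = D * A₂ * D) :
    D * (A₁ * D + adjoint A₂ * D * P) = (D * D) * S₁ ∧
      D * (A₂ * D + adjoint A₁ * D * P) = (D * D) * S₂ := by
  have hDsa : adjoint D = D := hD.isSelfAdjoint.adjoint_eq
  have hA1' : adjoint S₁ - adjoint P * S₂ = D * adjoint A₁ * D := by
    have := congrArg star hA1
    simpa [star_sub, star_mul, star_eq_adjoint, adjoint_adjoint, hDsa, mul_assoc] using this
  have hA2' : adjoint S₂ - adjoint P * S₁ = D * adjoint A₂ * D := by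
    have := congrArg star hA2
    simpa [star_sub, star_mul, star_eq_adjoint, adjoint_adjoint, hDsa, mul_assoc] using this
  constructor
  · have : D * (A₁ * D + adjoint A₂ * D * P)
        = (D * A₁ * D) + (D * adjoint A₂ * D) * P := by noncomm_ring
    rw [this, ← hA1, ← hA2', hD2]
    have h : adjoint P * (S₁ * P) = adjoint P * (P * S₁) := by rw [hc1P]
    calc S₁ - adjoint S₂ * P + (adjoint S₂ - adjoint P * S₁) * P
        = S₁ - adjoint P * (S₁ * P) := by noncomm_ring
      _ = S₁ - adjoint P * (P * S₁) := by rw [hc1P]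
      _ = (1 - adjoint P * P) * S₁ := by noncomm_ring
  · have : D * (A₂ * D + adjoint A₁ * D * P)
        = (D * A₂ * D) + (D * adjoint A₁ * D) * P := by noncomm_ring
    rw [this, ← hA2, ← hA1', hD2]
    calc S₂ - adjoint S₁ * P + (adjoint S₁ - adjoint P * S₂) * P
        = S₂ - adjoint P * (S₂ * P) := by noncomm_ring
      _ = S₂ - adjoint P * (P * S₂) := by rw [hc2P]
      _ = (1 - adjoint P * P) * S₂ := by noncomm_ring
end

section
/- Let S₁, S₂, P be pairwise commuting bounded operators on H with ‖P‖ ≤ 1, and suppose A₁, A₂ are bounded operators satisfying S₁ - S₂*P = D_P A₁ D_P, S₂ - S₁*P = D_P A₂ D_P, D_P S₁ = A₁ D_P + A₂* D_P P, and D_P S₂ = A₂ D_P + A₁* D_P P. If moreover A₁ A₂ = A₂ A₁, then S₁*S₁ - S₂*S₂ = D_P (A₁*A₁ - A₂*A₂) D_P. -/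
open ContinuousLinearMap Filter

variable {H : Type*} [NormedAddCommGroup H] [InnerProductSpace ℂ H] [CompleteSpace H]

set_option maxHeartbeats 1000000 in
/-- If `(A₁, A₂)` is a commuting fundamental operator pair of the commuting triple
`(S₁, S₂, P)`, then `S₁*S₁ - S₂*S₂ = D(A₁*A₁ - A₂*A₂)D`. -/
theorem stmt4 (S₁ S₂ P D A₁ A₂ : H →L[ℂ] H)
    (hc12 : S₁ * S₂ = S₂ * S₁) (hc1P : S₁ * P = P * S₁) (hc2P : S₂ * P = P * S₂)
    (hP : ‖P‖ ≤ 1) (hD : D.IsPositive) (hD2 : D * D = 1 - adjoint P * P)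
    (hA1 : S₁ - adjoint S₂ * P = D * A₁ * D)
    (hA2 : S₂ - adjoint S₁ * P = D * A₂ * D)
    (hF1 : D * S₁ = A₁ * D + adjoint A₂ * D * P)
    (hF2 : D * S₂ = A₂ * D + adjoint A₁ * D * P)
    (hA : A₁ * A₂ = A₂ * A₁) :
    adjoint S₁ * S₁ - adjoint S₂ * S₂ = D * (adjoint A₁ * A₁ - adjoint A₂ * A₂) * D := by
  have hDsa : star D = D := hD.isSelfAdjoint
  -- adjoints of S₁, S₂ commute
  have hadj12 : adjoint S₁ * adjoint S₂ = adjoint S₂ * adjoint S₁ := by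
    have := congrArg adjoint hc12
    simpa [← star_eq_adjoint, star_mul] using this.symm
  -- adjoint of hF1
  have h1 : adjoint S₁ * D = D * adjoint A₁ + adjoint P * D * A₂ := by
    have := congrArg adjoint hF1
    simpa [← star_eq_adjoint, star_mul, star_add, hDsa, mul_assoc] using this
  have h2 : adjoint S₂ * D = D * adjoint A₂ + adjoint P * D * A₁ := by
    have := congrArg adjoint hF2
    simpa [← star_eq_adjoint, star_mul, star_add, hDsa, mul_assoc] using this
  have hcross : adjoint S₁ * (adjoint S₂ * P) = adjoint S₂ * (adjoint S₁ * P) := by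
    rw [← mul_assoc, ← mul_assoc, hadj12]
  have e1 : adjoint S₁ * S₁ - adjoint S₂ * S₂
      = adjoint S₁ * (S₁ - adjoint S₂ * P) - adjoint S₂ * (S₂ - adjoint S₁ * P) := by
    simp only [mul_sub]
    rw [hcross]
    abel
  rw [e1, hA1, hA2]
  have r1 : adjoint S₁ * (D * A₁ * D) = (adjoint S₁ * D) * (A₁ * D) := by noncomm_ring
  have r2 : adjoint S₂ * (D * A₂ * D) = (adjoint S₂ * D) * (A₂ * D) := by noncomm_ring
  rw [r1, r2, h1, h2]
  have expand :
      (D * adjoint A₁ + adjoint P * D * A₂) * (A₁ * D)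
        - (D * adjoint A₂ + adjoint P * D * A₁) * (A₂ * D)
      = D * (adjoint A₁ * A₁ - adjoint A₂ * A₂) * D
        + adjoint P * D * (A₂ * A₁) * D - adjoint P * D * (A₁ * A₂) * D := by
    noncomm_ring
  rw [expand, hA]
  abel
end

section
/- Let S₁, S₂, P be pairwise commuting bounded operators on H with ‖P‖ ≤ 1, and let A₁ and B₂ be bounded operators satisfying S₁ - S₂*P = D_P A₁ D_P and S₂* - S₁ P* = D_{P*} B₂ D_{P*}. Then (S₁ D_P - D_{P*} B₂ P) D_P = D_P A₁ D_P, i.e., D_P A₁ = S₁ D_P - D_{P*} B₂ P on the range of D_P. -/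
open ContinuousLinearMap Filter

variable {H : Type*} [NormedAddCommGroup H] [InnerProductSpace ℂ H] [CompleteSpace H]

private noncomputable def extFun (R : ℝ) (hR0 : (0:ℝ) ≤ R)
    (f : C(Set.Icc (0:ℝ) R, ℝ)) : ℝ → ℝ :=
  fun x => f (Set.projIcc 0 R hR0 x)

private lemma extFun_cont (R : ℝ) (hR0 : (0:ℝ) ≤ R) (f : C(Set.Icc (0:ℝ) R, ℝ)) :
    Continuous (extFun R hR0 f) :=
  f.continuous.comp continuous_projIcc

private lemma mySub_carrier_mul (X Y U : H →L[ℂ] H) (R : ℝ) (hR0 : (0:ℝ) ≤ R)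
    {f g : C(Set.Icc (0:ℝ) R, ℝ)}
    (hf : U * cfc (extFun R hR0 f) X = cfc (extFun R hR0 f) Y * U)
    (hg : U * cfc (extFun R hR0 g) X = cfc (extFun R hR0 g) Y * U) :
    U * cfc (extFun R hR0 (f * g)) X = cfc (extFun R hR0 (f * g)) Y * U := by
  have hfg : extFun R hR0 (f * g) = fun x => extFun R hR0 f x * extFun R hR0 g x := rfl
  rw [hfg, cfc_mul _ _ X ((extFun_cont R hR0 f).continuousOn)
      ((extFun_cont R hR0 g).continuousOn),
    cfc_mul _ _ Y ((extFun_cont R hR0 f).continuousOn) ((extFun_cont R hR0 g).continuousOn),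
    ← mul_assoc, hf, mul_assoc, hg, ← mul_assoc]

private lemma mySub_carrier_add (X Y U : H →L[ℂ] H) (R : ℝ) (hR0 : (0:ℝ) ≤ R)
    {f g : C(Set.Icc (0:ℝ) R, ℝ)}
    (hf : U * cfc (extFun R hR0 f) X = cfc (extFun R hR0 f) Y * U)
    (hg : U * cfc (extFun R hR0 g) X = cfc (extFun R hR0 g) Y * U) :
    U * cfc (extFun R hR0 (f + g)) X = cfc (extFun R hR0 (f + g)) Y * U := by
  have hfg : extFun R hR0 (f + g) = fun x => extFun R hR0 f x + extFun R hR0 g x := rfl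
  rw [hfg, cfc_add X _ _ ((extFun_cont R hR0 f).continuousOn)
      ((extFun_cont R hR0 g).continuousOn),
    cfc_add Y _ _ ((extFun_cont R hR0 f).continuousOn) ((extFun_cont R hR0 g).continuousOn),
    mul_add, add_mul, hf, hg]

private lemma mySub_carrier_algebraMap (X Y U : H →L[ℂ] H)
    (hXsa : IsSelfAdjoint X) (hYsa : IsSelfAdjoint Y) (R : ℝ) (hR0 : (0:ℝ) ≤ R) (r : ℝ) :
    U * cfc (extFun R hR0 (algebraMap ℝ C(Set.Icc (0:ℝ) R, ℝ) r)) X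
      = cfc (extFun R hR0 (algebraMap ℝ C(Set.Icc (0:ℝ) R, ℝ) r)) Y * U := by
  have h1 : extFun R hR0 (algebraMap ℝ C(Set.Icc (0:ℝ) R, ℝ) r) = fun _ => r := rfl
  rw [h1, cfc_const r X hXsa, cfc_const r Y hYsa]
  exact (Algebra.commutes r U).symm

private noncomputable def mySub (X Y U : H →L[ℂ] H)
    (hXsa : IsSelfAdjoint X) (hYsa : IsSelfAdjoint Y) (R : ℝ) (hR0 : (0:ℝ) ≤ R) :
    Subalgebra ℝ C(Set.Icc (0:ℝ) R, ℝ) where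
  carrier := {f | U * cfc (extFun R hR0 f) X = cfc (extFun R hR0 f) Y * U}
  mul_mem' := fun hf hg => mySub_carrier_mul X Y U R hR0 hf hg
  add_mem' := fun hf hg => mySub_carrier_add X Y U R hR0 hf hg
  algebraMap_mem' := fun r => mySub_carrier_algebraMap X Y U hXsa hYsa R hR0 r

private lemma mem_mySub {X Y U : H →L[ℂ] H}
    {hXsa : IsSelfAdjoint X} {hYsa : IsSelfAdjoint Y} {R : ℝ} {hR0 : (0:ℝ) ≤ R}
    (f : C(Set.Icc (0:ℝ) R, ℝ)) :
    f ∈ mySub X Y U hXsa hYsa R hR0 ↔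
      U * cfc (extFun R hR0 f) X = cfc (extFun R hR0 f) Y * U := Iff.rfl

private lemma my_sqrt_unique (a b : H →L[ℂ] H) (hb : 0 ≤ b) (h : b * b = a) :
    cfc Real.sqrt a = b := by
  subst h
  have hbsa : IsSelfAdjoint b := IsSelfAdjoint.of_nonneg hb
  have h2 : b * b = cfc (fun x : ℝ => x * x) b := by
    rw [cfc_mul _ _ b (by fun_prop) (by fun_prop), cfc_id' ℝ b]
  rw [h2, ← cfc_comp Real.sqrt (fun x : ℝ => x * x) b hbsa (by fun_prop) (by fun_prop)]
  have : (spectrum ℝ b).EqOn (Real.sqrt ∘ fun x : ℝ => x * x) id := by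
    intro x hx
    have hx0 : 0 ≤ x := spectrum_nonneg_of_nonneg hb hx
    simp [Real.sqrt_mul_self hx0]
  rw [cfc_congr this, cfc_id ℝ b]

private lemma my_intertwine (X Y U : H →L[ℂ] H) (hX : 0 ≤ X) (hY : 0 ≤ Y)
    (hXY : U * X = Y * U) :
    U * cfc Real.sqrt X = cfc Real.sqrt Y * U := by
  rcases subsingleton_or_nontrivial H with hH | hH
  · exact Subsingleton.elim _ _
  have hXsa : IsSelfAdjoint X := IsSelfAdjoint.of_nonneg hX
  have hYsa : IsSelfAdjoint Y := IsSelfAdjoint.of_nonneg hY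
  set R : ℝ := max ‖X‖ ‖Y‖ with hR
  have hR0 : (0 : ℝ) ≤ R := le_trans (norm_nonneg X) (le_max_left _ _)
  have hsX : spectrum ℝ X ⊆ Set.Icc 0 R := fun x hx =>
    ⟨spectrum_nonneg_of_nonneg hX hx,
     le_trans (le_abs_self x) <| le_trans (spectrum.norm_le_norm_of_mem hx) (le_max_left _ _)⟩
  have hsY : spectrum ℝ Y ⊆ Set.Icc 0 R := fun x hx =>
    ⟨spectrum_nonneg_of_nonneg hY hx,
     le_trans (le_abs_self x) <| le_trans (spectrum.norm_le_norm_of_mem hx) (le_max_right _ _)⟩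
  set S : Subalgebra ℝ C(Set.Icc (0:ℝ) R, ℝ) := mySub X Y U hXsa hYsa R hR0 with hS
  have hΦX : (fun f : C(Set.Icc (0:ℝ) R, ℝ) => cfc (extFun R hR0 f) X) =
      fun f => cfcHom hXsa (f.comp ⟨fun x : spectrum ℝ X => Set.projIcc 0 R hR0 x,
        continuous_projIcc.comp continuous_subtype_val⟩) := by
    funext f
    rw [cfc_apply (extFun R hR0 f) X hXsa ((extFun_cont R hR0 f).continuousOn)]
    congr
  have hΦY : (fun f : C(Set.Icc (0:ℝ) R, ℝ) => cfc (extFun R hR0 f) Y) =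
      fun f => cfcHom hYsa (f.comp ⟨fun x : spectrum ℝ Y => Set.projIcc 0 R hR0 x,
        continuous_projIcc.comp continuous_subtype_val⟩) := by
    funext f
    rw [cfc_apply (extFun R hR0 f) Y hYsa ((extFun_cont R hR0 f).continuousOn)]
    congr
  have hcX : Continuous (fun f : C(Set.Icc (0:ℝ) R, ℝ) => cfc (extFun R hR0 f) X) := by
    rw [hΦX]
    exact (cfcHom_isClosedEmbedding hXsa).continuous.comp (ContinuousMap.continuous_precomp _)
  have hcY : Continuous (fun f : C(Set.Icc (0:ℝ) R, ℝ) => cfc (extFun R hR0 f) Y) := by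
    rw [hΦY]
    exact (cfcHom_isClosedEmbedding hYsa).continuous.comp (ContinuousMap.continuous_precomp _)
  have hSclosed : IsClosed (S : Set C(Set.Icc (0:ℝ) R, ℝ)) := by
    have heq : (S : Set C(Set.Icc (0:ℝ) R, ℝ)) =
        {f | U * cfc (extFun R hR0 f) X = cfc (extFun R hR0 f) Y * U} := rfl
    rw [heq]
    exact isClosed_eq (by fun_prop) (by fun_prop)
  have hpoly : polynomialFunctions (Set.Icc (0:ℝ) R) ≤ S := by
    rw [polynomialFunctions.eq_adjoin_X]
    apply Algebra.adjoin_le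
    rintro f ⟨rfl⟩
    rw [SetLike.mem_coe, hS, mem_mySub]
    have hXid : cfc (extFun R hR0 (Polynomial.toContinuousMapOnAlgHom _ Polynomial.X)) X
        = cfc (id : ℝ → ℝ) X := by
      apply cfc_congr
      intro x hx
      simp only [extFun, Polynomial.toContinuousMapOnAlgHom_apply,
        Polynomial.toContinuousMapOn_apply, Polynomial.toContinuousMap_apply,
        Polynomial.eval_X, id_eq]
      rw [Set.projIcc_of_mem hR0 (hsX hx)]
    have hYid : cfc (extFun R hR0 (Polynomial.toContinuousMapOnAlgHom _ Polynomial.X)) Y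
        = cfc (id : ℝ → ℝ) Y := by
      apply cfc_congr
      intro x hx
      simp only [extFun, Polynomial.toContinuousMapOnAlgHom_apply,
        Polynomial.toContinuousMapOn_apply, Polynomial.toContinuousMap_apply,
        Polynomial.eval_X, id_eq]
      rw [Set.projIcc_of_mem hR0 (hsY hx)]
    rw [hXid, hYid, cfc_id ℝ X, cfc_id ℝ Y]
    exact hXY
  have hStop : S = ⊤ := by
    have h1 : (polynomialFunctions (Set.Icc (0:ℝ) R)).topologicalClosure = ⊤ :=
      polynomialFunctions_closure_eq_top 0 R
    refine top_unique ?_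
    rw [← h1]
    exact Subalgebra.topologicalClosure_minimal hpoly hSclosed
  set fs : C(Set.Icc (0:ℝ) R, ℝ) :=
    ⟨fun x => Real.sqrt x, Real.continuous_sqrt.comp continuous_subtype_val⟩ with hfs
  have hmem : fs ∈ S := hStop ▸ Algebra.mem_top
  rw [hS, mem_mySub] at hmem
  have heX : cfc (extFun R hR0 fs) X = cfc Real.sqrt X := by
    apply cfc_congr
    intro x hx
    simp only [extFun, hfs, ContinuousMap.coe_mk]
    rw [Set.projIcc_of_mem hR0 (hsX hx)]
  have heY : cfc (extFun R hR0 fs) Y = cfc Real.sqrt Y := by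
    apply cfc_congr
    intro x hx
    simp only [extFun, hfs, ContinuousMap.coe_mk]
    rw [Set.projIcc_of_mem hR0 (hsY hx)]
  rw [heX, heY] at hmem
  exact hmem

/-- If `A₁` is the first fundamental operator of `(S₁,S₂,P)` and `B₂` the second
fundamental operator of the adjoint triple, then `(S₁ D - D' B₂ P) D = D A₁ D`
(where `D = D_P`, `D' = D_{P*}`). -/
theorem stmt5 (S₁ S₂ P D D' A₁ B₂ : H →L[ℂ] H)
    (hc12 : S₁ * S₂ = S₂ * S₁) (hc1P : S₁ * P = P * S₁) (hc2P : S₂ * P = P * S₂)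
    (hP : ‖P‖ ≤ 1) (hD : D.IsPositive) (hD2 : D * D = 1 - adjoint P * P)
    (hD' : D'.IsPositive) (hD'2 : D' * D' = 1 - P * adjoint P)
    (hA1 : S₁ - adjoint S₂ * P = D * A₁ * D)
    (hB2 : adjoint S₂ - S₁ * adjoint P = D' * B₂ * D') :
    (S₁ * D - D' * B₂ * P) * D = D * A₁ * D := by
  have hDn : 0 ≤ D := (nonneg_iff_isPositive D).2 hD
  have hD'n : 0 ≤ D' := (nonneg_iff_isPositive D').2 hD'
  have hX : 0 ≤ 1 - adjoint P * P := by
    rw [← hD2]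
    calc (0 : H →L[ℂ] H) ≤ star D * D := star_mul_self_nonneg D
    _ = D * D := by rw [hD.isSelfAdjoint.star_eq]
  have hY : 0 ≤ 1 - P * adjoint P := by
    rw [← hD'2]
    calc (0 : H →L[ℂ] H) ≤ star D' * D' := star_mul_self_nonneg D'
    _ = D' * D' := by rw [hD'.isSelfAdjoint.star_eq]
  have hXY : P * (1 - adjoint P * P) = (1 - P * adjoint P) * P := by
    simp [mul_sub, sub_mul, mul_assoc]
  have hPD : P * D = D' * P := by
    have := my_intertwine (1 - adjoint P * P) (1 - P * adjoint P) P hX hY hXY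
    rwa [my_sqrt_unique _ D hDn hD2, my_sqrt_unique _ D' hD'n hD'2] at this
  have expand : (S₁ * D - D' * B₂ * P) * D
      = S₁ * (D * D) - D' * B₂ * (P * D) := by
    rw [sub_mul]; rw [mul_assoc, mul_assoc]
  rw [expand, hPD, hD2, ← mul_assoc (D' * B₂) D' P, ← hB2, ← hA1]
  noncomm_ring
end

section
/- Let S₁, S₂, P be pairwise commuting bounded operators on H with ‖P‖ ≤ 1, and let A₁, B₁ be bounded operators satisfying S₁ - S₂*P = D_P A₁ D_P and S₁* - S₂ P* = D_{P*} B₁ D_{P*}. Then D_{P*} P A₁ D_P = D_{P*} B₁* P D_P; in particular P A₁ = B₁* P on the range of D_P, viewed as operators into the closure of the range of D_{P*}. -/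
set_option maxHeartbeats 1000000
set_option synthInstance.maxHeartbeats 1000000

open ContinuousLinearMap Filter Polynomial

variable {H : Type*} [NormedAddCommGroup H] [InnerProductSpace ℂ H] [CompleteSpace H]

private lemma aeval_semiconj {A : Type*} [Ring A] [Algebra ℝ A] (a b p : A)
    (h : p * a = b * p) (q : ℝ[X]) : p * aeval a q = aeval b q * p := by
  induction q using Polynomial.induction_on with
  | C r => simpa using (Algebra.commutes r p).symm
  | add q r hq hr => simp only [map_add, mul_add, add_mul, hq, hr]
  | monomial n r hq =>
    have h1 : aeval a (C r * X ^ (n + 1)) = aeval a (C r * X ^ n) * a := by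
      simp [pow_succ, mul_assoc]
    have h2 : aeval b (C r * X ^ (n + 1)) = aeval b (C r * X ^ n) * b := by
      simp [pow_succ, mul_assoc]
    rw [h1, h2, ← mul_assoc, hq, mul_assoc, h, ← mul_assoc]

private lemma semiconj_sqrt (a b p d e : H →L[ℂ] H)
    (hd : 0 ≤ d) (he : 0 ≤ e) (hd2 : d * d = a) (he2 : e * e = b)
    (h : p * a = b * p) : p * d = e * p := by
  have hdsa : IsSelfAdjoint d := .of_nonneg hd
  have hesa : IsSelfAdjoint e := .of_nonneg he
  have ha : 0 ≤ a := hd2 ▸ (by simpa [hdsa.star_eq] using star_mul_self_nonneg d)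
  have hb : 0 ≤ b := he2 ▸ (by simpa [hesa.star_eq] using star_mul_self_nonneg e)
  have hasa : IsSelfAdjoint a := .of_nonneg ha
  have hbsa : IsSelfAdjoint b := .of_nonneg hb
  set M : ℝ := max (‖a‖ * ‖(1 : H →L[ℂ] H)‖) (‖b‖ * ‖(1 : H →L[ℂ] H)‖) with hM
  have hspa : spectrum ℝ a ⊆ Set.Icc 0 M := fun x hx =>
    ⟨spectrum_nonneg_of_nonneg ha hx,
     le_trans (le_trans (le_abs_self x) (spectrum.norm_le_norm_mul_of_mem hx)) (le_max_left _ _)⟩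
  have hspb : spectrum ℝ b ⊆ Set.Icc 0 M := fun x hx =>
    ⟨spectrum_nonneg_of_nonneg hb hx,
     le_trans (le_trans (le_abs_self x) (spectrum.norm_le_norm_mul_of_mem hx)) (le_max_right _ _)⟩
  let ca : C(spectrum ℝ a, Set.Icc (0:ℝ) M) := ⟨Set.inclusion hspa, continuous_inclusion hspa⟩
  let cb : C(spectrum ℝ b, Set.Icc (0:ℝ) M) := ⟨Set.inclusion hspb, continuous_inclusion hspb⟩
  let Φa : C(Set.Icc (0:ℝ) M, ℝ) →ₐ[ℝ] (H →L[ℂ] H) :=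
    ((cfcHom hasa (R := ℝ)).toAlgHom.comp (ContinuousMap.compRightAlgHom ℝ ℝ ca))
  let Φb : C(Set.Icc (0:ℝ) M, ℝ) →ₐ[ℝ] (H →L[ℂ] H) :=
    ((cfcHom hbsa (R := ℝ)).toAlgHom.comp (ContinuousMap.compRightAlgHom ℝ ℝ cb))
  have hΦa_cont : Continuous Φa :=
    (cfcHom_isClosedEmbedding hasa).continuous.comp (ContinuousMap.continuous_precomp ca)
  have hΦb_cont : Continuous Φb :=
    (cfcHom_isClosedEmbedding hbsa).continuous.comp (ContinuousMap.continuous_precomp cb)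
  have hida : Φa ((X : ℝ[X]).toContinuousMapOn (Set.Icc (0:ℝ) M)) = a := by
    have hc : ((X : ℝ[X]).toContinuousMapOn (Set.Icc (0:ℝ) M)).comp ca
        = (ContinuousMap.id ℝ).restrict (spectrum ℝ a) := by
      ext x; simp [ca]
    show cfcHom hasa (((X : ℝ[X]).toContinuousMapOn _).comp ca) = a
    rw [hc, cfcHom_id hasa]
  have hidb : Φb ((X : ℝ[X]).toContinuousMapOn (Set.Icc (0:ℝ) M)) = b := by
    have hc : ((X : ℝ[X]).toContinuousMapOn (Set.Icc (0:ℝ) M)).comp cb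
        = (ContinuousMap.id ℝ).restrict (spectrum ℝ b) := by
      ext x; simp [cb]
    show cfcHom hbsa (((X : ℝ[X]).toContinuousMapOn _).comp cb) = b
    rw [hc, cfcHom_id hbsa]
  have keya : ∀ q : ℝ[X], Φa (q.toContinuousMapOn (Set.Icc (0:ℝ) M)) = aeval a q := by
    intro q
    have h1 := Polynomial.aeval_algHom_apply
      (Φa.comp (toContinuousMapOnAlgHom (Set.Icc (0:ℝ) M))) X q
    simpa [hida] using h1.symm
  have keyb : ∀ q : ℝ[X], Φb (q.toContinuousMapOn (Set.Icc (0:ℝ) M)) = aeval b q := by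
    intro q
    have h1 := Polynomial.aeval_algHom_apply
      (Φb.comp (toContinuousMapOnAlgHom (Set.Icc (0:ℝ) M))) X q
    simpa [hidb] using h1.symm
  -- every continuous function is semiconjugated
  have hmem : ∀ f : C(Set.Icc (0:ℝ) M, ℝ), p * Φa f = Φb f * p := by
    have hSclosed : IsClosed {f : C(Set.Icc (0:ℝ) M, ℝ) | p * Φa f = Φb f * p} :=
      isClosed_eq (continuous_const.mul hΦa_cont) (hΦb_cont.mul continuous_const)
    intro f
    have hf : f ∈ closure (polynomialFunctions (Set.Icc (0:ℝ) M) : Set _) := by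
      rw [← Subalgebra.topologicalClosure_coe, polynomialFunctions_closure_eq_top 0 M]
      trivial
    refine closure_minimal ?_ hSclosed hf
    intro g hg
    rw [polynomialFunctions_coe] at hg
    obtain ⟨q, rfl⟩ := hg
    show p * Φa (q.toContinuousMapOn _) = Φb (q.toContinuousMapOn _) * p
    rw [keya, keyb]
    exact aeval_semiconj a b p h q
  -- the square-root function
  let fs : C(Set.Icc (0:ℝ) M, ℝ) :=
    ⟨fun x => Real.sqrt x, Real.continuous_sqrt.comp continuous_subtype_val⟩
  let f4 : C(Set.Icc (0:ℝ) M, ℝ) :=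
    ⟨fun x => Real.sqrt (Real.sqrt x),
      Real.continuous_sqrt.comp (Real.continuous_sqrt.comp continuous_subtype_val)⟩
  have hfs_sq : fs * fs = (X : ℝ[X]).toContinuousMapOn (Set.Icc (0:ℝ) M) := by
    ext x
    simpa [fs] using Real.mul_self_sqrt x.2.1
  have h4 : f4 * f4 = fs := by
    ext x
    simpa [f4, fs] using Real.mul_self_sqrt (Real.sqrt_nonneg _)
  have ha_eq : Φa fs * Φa fs = a := by rw [← map_mul, hfs_sq, hida]
  have hb_eq : Φb fs * Φb fs = b := by rw [← map_mul, hfs_sq, hidb]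
  have hfa_nonneg : 0 ≤ Φa fs := by
    rw [← h4, map_mul]
    have hsa4 : IsSelfAdjoint (Φa f4) := cfcHom_predicate hasa _
    simpa [hsa4.star_eq] using star_mul_self_nonneg (Φa f4)
  have hfb_nonneg : 0 ≤ Φb fs := by
    rw [← h4, map_mul]
    have hsa4 : IsSelfAdjoint (Φb f4) := cfcHom_predicate hbsa _
    simpa [hsa4.star_eq] using star_mul_self_nonneg (Φb f4)
  have hda : Φa fs = d := by
    rw [← CFC.sqrt_unique ha_eq hfa_nonneg, CFC.sqrt_unique hd2 hd]
  have heb : Φb fs = e := by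
    rw [← CFC.sqrt_unique hb_eq hfb_nonneg, CFC.sqrt_unique he2 he]
  have := hmem fs
  rwa [hda, heb] at this

/-- If `A₁` is the first fundamental operator of `(S₁,S₂,P)` and `B₁` the first
fundamental operator of the adjoint triple, then `D' P A₁ D = D' B₁* P D`,
i.e. `P A₁ = B₁* P` on the range of `D`, as operators into the closure of `Ran D'`. -/
theorem stmt6 (S₁ S₂ P D D' A₁ B₁ : H →L[ℂ] H)
    (hc12 : S₁ * S₂ = S₂ * S₁) (hc1P : S₁ * P = P * S₁) (hc2P : S₂ * P = P * S₂)
    (hP : ‖P‖ ≤ 1) (hD : D.IsPositive) (hD2 : D * D = 1 - adjoint P * P)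
    (hD' : D'.IsPositive) (hD'2 : D' * D' = 1 - P * adjoint P)
    (hA1 : S₁ - adjoint S₂ * P = D * A₁ * D)
    (hB1 : adjoint S₁ - S₂ * adjoint P = D' * B₁ * D') :
    D' * P * A₁ * D = D' * adjoint B₁ * P * D := by
  have hDpos : 0 ≤ D := (nonneg_iff_isPositive D).mpr hD
  have hD'pos : 0 ≤ D' := (nonneg_iff_isPositive D').mpr hD'
  have hsemi : P * D = D' * P := by
    refine semiconj_sqrt _ _ P D D' hDpos hD'pos hD2 hD'2 ?_
    simp only [mul_sub, sub_mul, mul_one, one_mul, mul_assoc]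
  have hD'sa : IsSelfAdjoint D' := .of_nonneg hD'pos
  have hB1' : S₁ - P * adjoint S₂ = D' * adjoint B₁ * D' := by
    have hstar := congrArg star hB1
    simpa [star_sub, star_mul, star_eq_adjoint, adjoint_adjoint, hD'sa.star_eq, mul_assoc]
      using hstar
  calc D' * P * A₁ * D = P * D * A₁ * D := by rw [← hsemi]
    _ = P * (D * A₁ * D) := by simp only [mul_assoc]
    _ = P * (S₁ - adjoint S₂ * P) := by rw [← hA1]
    _ = (S₁ - P * adjoint S₂) * P := by
        simp only [mul_sub, sub_mul, ← hc1P, mul_assoc]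
    _ = D' * adjoint B₁ * (D' * P) := by rw [hB1', mul_assoc]
    _ = D' * adjoint B₁ * P * D := by rw [← hsemi, ← mul_assoc, mul_assoc]
end

section
/- Let (S₁,S₂,P) and its adjoint triple have fundamental operator pairs (A₁,A₂) and (B₁,B₂) respectively, satisfying P A_i = B_i* P on the range of D_P for i = 1, 2. If A₁ A₂ = A₂ A₁ and P has dense range, then B₁ B₂ = B₂ B₁ (as operators on the closure of the range of D_{P*}). -/
open ContinuousLinearMap

variable {H : Type*} [NormedAddCommGroup H] [InnerProductSpace ℂ H] [CompleteSpace H]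

/-- The closure of the range of an operator `D` (e.g. the defect space `𝒟_P` of a
contraction when `D = D_P`). -/
noncomputable def defectSpace (D : H →L[ℂ] H) : Submodule ℂ H :=
  (LinearMap.range (D : H →ₗ[ℂ] H)).topologicalClosure

instance (D : H →L[ℂ] H) : CompleteSpace (defectSpace D) :=
  (Submodule.isClosed_topologicalClosure _).completeSpace_coe

set_option maxHeartbeats 1600000 in
/-- If `(A₁,A₂)` (on `𝒟_P`) and `(B₁,B₂)` (on `𝒟_{P*}`) are the fundamental operator pairs
of a `Γ₃`-contraction `(S₁,S₂,P)` and of its adjoint, so that `P Aᵢ = Bᵢ* P` on `𝒟_P`, and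
if `A₁ A₂ = A₂ A₁` and `P` has dense range, then `B₁ B₂ = B₂ B₁`. -/
theorem stmt9 (P D D' : H →L[ℂ] H) (hP : ‖P‖ ≤ 1)
    (hD : D.IsPositive) (hD2 : D * D = 1 - adjoint P * P)
    (hD' : D'.IsPositive) (hD'2 : D' * D' = 1 - P * adjoint P)
    (hdense : DenseRange (P : H → H))
    (A₁ A₂ : defectSpace D →L[ℂ] defectSpace D)
    (B₁ B₂ : defectSpace D' →L[ℂ] defectSpace D')
    (hPmap : ∀ x : defectSpace D, P (x : H) ∈ defectSpace D')
    (h1 : ∀ x : defectSpace D, P ((A₁ x : H)) = (adjoint B₁ ⟨P (x : H), hPmap x⟩ : H))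
    (h2 : ∀ x : defectSpace D, P ((A₂ x : H)) = (adjoint B₂ ⟨P (x : H), hPmap x⟩ : H))
    (hA : A₁ * A₂ = A₂ * A₁) :
    B₁ * B₂ = B₂ * B₁ := by
  have hDsa : adjoint D = D := by
    rw [← ContinuousLinearMap.star_eq_adjoint]; exact hD.isSelfAdjoint
  have hD'sa : adjoint D' = D' := by
    rw [← ContinuousLinearMap.star_eq_adjoint]; exact hD'.isSelfAdjoint
  -- the restriction of `P` as a map from `𝒟_P` to `𝒟_{P*}`
  let ψ : defectSpace D →L[ℂ] defectSpace D' :=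
    ContinuousLinearMap.codRestrict (P.comp (defectSpace D).subtypeL) (defectSpace D')
      (fun x => hPmap x)
  have hψ : ∀ x : defectSpace D, (ψ x : H) = P (x : H) := fun x => rfl
  have hψ' : ∀ x : defectSpace D, ψ x = ⟨P (x : H), hPmap x⟩ := fun x => rfl
  -- ψ has dense range
  have htop : (LinearMap.range (ψ : defectSpace D →ₗ[ℂ] defectSpace D')).topologicalClosure
      = ⊤ := by
    rw [Submodule.topologicalClosure_eq_top_iff, Submodule.eq_bot_iff]
    intro y hy
    have hy' : ∀ x : defectSpace D, (inner ℂ (ψ x : defectSpace D') y : ℂ) = 0 := fun x =>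
      hy (ψ x) (LinearMap.mem_range_self _ x)
    have hy'' : ∀ x : defectSpace D, (inner ℂ ((y : H)) (P (x : H)) : ℂ) = 0 := by
      intro x
      have := hy' x
      rw [Submodule.coe_inner, hψ] at this
      rw [← inner_conj_symm, this, map_zero]
    -- step 1 : D (P* y) = 0
    have hDw : D (adjoint P (y : H)) = 0 := by
      have h0 : ∀ v : H, (inner ℂ (D (adjoint P (y : H))) v : ℂ) = 0 := by
        intro v
        have hv : D v ∈ defectSpace D :=
          Submodule.le_topologicalClosure _ (LinearMap.mem_range_self _ v)
        calc (inner ℂ (D (adjoint P (y : H))) v : ℂ)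
            = inner ℂ (adjoint D (adjoint P (y : H))) v := by rw [hDsa]
          _ = inner ℂ (adjoint P (y : H)) (D v) := adjoint_inner_left _ _ _
          _ = inner ℂ (y : H) (P (D v)) := adjoint_inner_left _ _ _
          _ = 0 := hy'' ⟨D v, hv⟩
      have := h0 (D (adjoint P (y : H)))
      rwa [inner_self_eq_zero] at this
    -- step 2 : (1 - P* P)(P* y) = 0
    have hDD : (D * D) (adjoint P (y : H)) = 0 := by
      rw [ContinuousLinearMap.mul_apply, hDw, map_zero]
    rw [hD2] at hDD
    have hsub : adjoint P ((y : H) - P (adjoint P (y : H))) = 0 := by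
      simpa [sub_apply, one_apply, mul_apply, map_sub] using hDD
    -- step 3 : since P* is injective (dense range of P), y = P P* y
    have hz : (y : H) - P (adjoint P (y : H)) = 0 := by
      set z : H := (y : H) - P (adjoint P (y : H)) with hzdef
      have horth : ∀ u : H, u ∈ Set.range P → (innerSL ℂ z) u = 0 := by
        rintro u ⟨v, rfl⟩
        have : (inner ℂ (adjoint P z) v : ℂ) = inner ℂ z (P v) := adjoint_inner_left _ _ _
        rw [hsub, inner_zero_left] at this
        simpa [innerSL_apply_apply] using this.symm
      have hclosed : IsClosed {u : H | (innerSL ℂ z) u = 0} :=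
        isClosed_singleton.preimage (innerSL ℂ z).continuous
      have hall : ∀ u : H, (innerSL ℂ z) u = 0 := by
        intro u
        have hsubset : closure (Set.range P) ⊆ {u : H | (innerSL ℂ z) u = 0} :=
          closure_minimal horth hclosed
        have : u ∈ closure (Set.range P) := by
          rw [hdense.closure_range]; trivial
        exact hsubset this
      have := hall z
      simpa [innerSL_apply_apply, inner_self_eq_zero] using this
    have hyP : (y : H) = P (adjoint P (y : H)) := sub_eq_zero.mp hz
    -- step 4 : D' y = 0
    have hD'y : D' (y : H) = 0 := by
      have hDD' : (D' * D') (y : H) = 0 := by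
        rw [hD'2]
        simpa [sub_apply, one_apply, mul_apply] using (sub_eq_zero.mpr hyP)
      have h0 : (inner ℂ (D' (y : H)) (D' (y : H)) : ℂ) = 0 := by
        calc (inner ℂ (D' (y : H)) (D' (y : H)) : ℂ)
            = inner ℂ (adjoint D' (y : H)) (D' (y : H)) := by rw [hD'sa]
          _ = inner ℂ (y : H) (D' (D' (y : H))) := adjoint_inner_left _ _ _
          _ = inner ℂ (y : H) ((D' * D') (y : H)) := by rw [ContinuousLinearMap.mul_apply]
          _ = 0 := by rw [hDD', inner_zero_right]
      rwa [inner_self_eq_zero] at h0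
    -- step 5 : y ∈ closure (range D') and y ⟂ range D', so y = 0
    have horth' : ∀ u : H, u ∈ Set.range D' → (innerSL ℂ (y : H)) u = 0 := by
      rintro u ⟨v, rfl⟩
      have : (inner ℂ (adjoint D' (y : H)) v : ℂ) = inner ℂ (y : H) (D' v) :=
        adjoint_inner_left _ _ _
      rw [hD'sa, hD'y, inner_zero_left] at this
      simpa [innerSL_apply_apply] using this.symm
    have hclosed' : IsClosed {u : H | (innerSL ℂ (y : H)) u = 0} :=
      isClosed_singleton.preimage (innerSL ℂ (y : H)).continuous
    have hmem : (y : H) ∈ closure (Set.range (D' : H → H)) := by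
      have h := y.2
      simpa only [defectSpace, ← SetLike.mem_coe, Submodule.topologicalClosure_coe, LinearMap.coe_range, ContinuousLinearMap.coe_coe] using h
    have : (innerSL ℂ (y : H)) (y : H) = 0 :=
      closure_minimal horth' hclosed' hmem
    have : (y : H) = 0 := by simpa [innerSL_apply_apply, inner_self_eq_zero] using this
    exact Subtype.ext this
  have hdenseψ : DenseRange ψ := by
    have : closure (Set.range ψ) = Set.univ := by
      have := congrArg (fun s : Submodule ℂ (defectSpace D') => (s : Set (defectSpace D'))) htop
      simpa [Submodule.topologicalClosure_coe, LinearMap.coe_range, ContinuousLinearMap.coe_coe] using this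
    rw [DenseRange, dense_iff_closure_eq, this]
  -- key pointwise identity on the range of ψ
  have hkey : (adjoint B₁ ∘L adjoint B₂) ∘ ψ = (adjoint B₂ ∘L adjoint B₁) ∘ ψ := by
    funext x
    have e2 : ψ (A₂ x) = adjoint B₂ (ψ x) := by rw [hψ']; exact Subtype.ext (h2 x)
    have e1 : ψ (A₁ x) = adjoint B₁ (ψ x) := by rw [hψ']; exact Subtype.ext (h1 x)
    have e12 : ψ (A₁ (A₂ x)) = adjoint B₁ (adjoint B₂ (ψ x)) := by
      rw [← e2, hψ']; exact Subtype.ext (h1 (A₂ x))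
    have e21 : ψ (A₂ (A₁ x)) = adjoint B₂ (adjoint B₁ (ψ x)) := by
      rw [← e1, hψ']; exact Subtype.ext (h2 (A₁ x))
    have hcomm : A₁ (A₂ x) = A₂ (A₁ x) := by
      have := congrArg (fun T => T x) hA
      simpa [mul_apply] using this
    simp only [Function.comp_apply, coe_comp']
    rw [← e12, ← e21, hcomm]
  have hfun : (adjoint B₁ ∘L adjoint B₂) = (adjoint B₂ ∘L adjoint B₁) := by
    refine ContinuousLinearMap.coeFn_injective ?_
    exact hdenseψ.equalizer (adjoint B₁ ∘L adjoint B₂).continuous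
      (adjoint B₂ ∘L adjoint B₁).continuous hkey
  have hadj : adjoint (B₂ ∘L B₁) = adjoint (B₁ ∘L B₂) := by
    rw [adjoint_comp, adjoint_comp]; exact hfun
  have := congrArg adjoint hadj
  rw [adjoint_adjoint, adjoint_adjoint] at this
  simpa [mul_def] using this.symm
end

section
/- For a point (s₁, s₂, p) ∈ ℂ³, if there exist c₁, c₂ ∈ ℂ with |c₁| + |c₂| ≤ 3, |p| ≤ 1, s₁ = c₁ + c̄₂ p and s₂ = c₂ + c̄₁ p, then |s₁ - s̄₂ p| + |s₂ - s̄₁ p| ≤ 3(1 - |p|²). -/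
open Complex

/-- Condition (8) implies condition (6) in the characterization of the closed symmetrized
tridisc: if `s₁ = c₁ + c̄₂ p`, `s₂ = c₂ + c̄₁ p` with `|c₁| + |c₂| ≤ 3` and `|p| ≤ 1`, then
`|s₁ - s̄₂ p| + |s₂ - s̄₁ p| ≤ 3(1 - |p|²)`. -/
theorem stmt10 (s₁ s₂ p c₁ c₂ : ℂ) (hc : ‖c₁‖ + ‖c₂‖ ≤ 3)
    (hp : ‖p‖ ≤ 1)
    (h1 : s₁ = c₁ + (starRingEnd ℂ) c₂ * p) (h2 : s₂ = c₂ + (starRingEnd ℂ) c₁ * p) :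
    ‖s₁ - (starRingEnd ℂ) s₂ * p‖ + ‖s₂ - (starRingEnd ℂ) s₁ * p‖ ≤
      3 * (1 - ‖p‖ ^ 2) := by
  have hpp : ((starRingEnd ℂ) p) * p = ((‖p‖ : ℝ) ^ 2 : ℝ) := by
    rw [mul_comm, Complex.mul_conj']; push_cast; ring
  have e1 : s₁ - (starRingEnd ℂ) s₂ * p = c₁ * (1 - ((‖p‖ : ℝ) ^ 2 : ℝ)) := by
    subst h1 h2; simp only [map_add, map_mul, Complex.conj_conj]
    rw [← hpp]; ring
  have e2 : s₂ - (starRingEnd ℂ) s₁ * p = c₂ * (1 - ((‖p‖ : ℝ) ^ 2 : ℝ)) := by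
    subst h1 h2; simp only [map_add, map_mul, Complex.conj_conj]
    rw [← hpp]; ring
  have hnn : (0:ℝ) ≤ 1 - ‖p‖ ^ 2 := by nlinarith [norm_nonneg p]
  rw [e1, e2, norm_mul, norm_mul]
  have : ‖(1 : ℂ) - ((‖p‖ : ℝ) ^ 2 : ℝ)‖ = 1 - ‖p‖ ^ 2 := by
    rw [show ((1:ℂ) - ((‖p‖ : ℝ)^2 : ℝ)) = (((1 - ‖p‖ ^2 : ℝ)) : ℂ) by push_cast; ring,
      Complex.norm_real, Real.norm_eq_abs, _root_.abs_of_nonneg hnn]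
  rw [this]
  nlinarith [norm_nonneg c₁, norm_nonneg c₂]
end

section
/- If z₁, z₂, z₃ ∈ ℂ satisfy |z_i| ≤ 1 for i = 1,2,3, and s₁ = z₁+z₂+z₃, s₂ = z₁z₂+z₂z₃+z₃z₁, p = z₁z₂z₃, then 3 - s₁ z - s₂ w + 3 p z w ≠ 0 for all z, w in the open unit disc. -/
set_option maxHeartbeats 1000000

open ComplexConjugate

private lemma sq_expand (x y ζ : ℂ) : (‖x + y*ζ‖)^2 =
    (‖x‖)^2 + (‖y‖)^2*(‖ζ‖)^2 + 2*((conj x * y * ζ).re) := by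
  rw [Complex.sq_norm, Complex.sq_norm, Complex.sq_norm, Complex.sq_norm]
  simp [Complex.normSq_apply, Complex.add_re, Complex.add_im, Complex.mul_re, Complex.mul_im,
    Complex.conj_re, Complex.conj_im]
  ring

private lemma le_of_sq' {x y : ℝ} (hy : 0 ≤ y) (h : x^2 ≤ y^2) (hx : 0 ≤ x) : x ≤ y := by
  nlinarith

/-- Algebraic maximum-modulus principle for affine fractions: if `|c+dζ| ≤ |a+bζ|` on the
unit circle and `|b| ≤ |a|`, then the same holds on the closed unit disc. -/
private lemma mm (a b c d : ℂ) (hba : ‖b‖ ≤ ‖a‖)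
    (hb : ∀ ζ : ℂ, ‖ζ‖ = 1 → ‖c + d*ζ‖ ≤ ‖a + b*ζ‖) :
    ∀ ζ : ℂ, ‖ζ‖ ≤ 1 → ‖c + d*ζ‖ ≤ ‖a + b*ζ‖ := by
  set A := ‖a‖ with hA
  set B := ‖b‖ with hB
  set C := ‖c‖ with hC
  set D := ‖d‖ with hD
  set γ : ℂ := conj a * b - conj c * d with hγ
  set g := ‖γ‖ with hg
  have hA0 : 0 ≤ A := norm_nonneg a
  have hB0 : 0 ≤ B := norm_nonneg b
  have hC0 : 0 ≤ C := norm_nonneg c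
  have hD0 : 0 ≤ D := norm_nonneg d
  have hg0 : 0 ≤ g := norm_nonneg γ
  have habAB : ‖conj a * b‖ = A * B := by
    rw [norm_mul, Complex.norm_conj]
  have hcdCD : ‖conj c * d‖ = C * D := by
    rw [norm_mul, Complex.norm_conj]
  have t1 : A*B - C*D ≤ g := by
    have e : γ + conj c * d = conj a * b := by rw [hγ]; ring
    have h := norm_add_le γ (conj c * d)
    rw [e, habAB, hcdCD] at h
    linarith
  have t2 : C*D - A*B ≤ g := by
    have e : conj a * b + -γ = conj c * d := by rw [hγ]; ring
    have h := norm_add_le (conj a * b) (-γ)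
    rw [e, habAB, norm_neg] at h
    rw [← hg] at h
    linarith
  -- boundary condition in algebraic form: A²+B²-C²-D² ≥ 2g
  have h2 : 2*g ≤ A^2 + B^2 - C^2 - D^2 := by
    by_cases hγ0 : γ = 0
    · have hb1 := hb 1 (by simp)
      have hone : ‖(1:ℂ)‖ = 1 := norm_one
      have hsq : (‖c + d*1‖)^2 ≤ (‖a + b*1‖)^2 := by
        nlinarith [norm_nonneg (c + d*1), norm_nonneg (a + b*1)]
      rw [sq_expand, sq_expand, hone] at hsq
      have h0 : conj a * b - conj c * d = 0 := by rw [← hγ]; exact hγ0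
      have hre : conj a * b = conj c * d := sub_eq_zero.mp h0
      rw [hre] at hsq
      have hg' : g = 0 := by rw [hg, hγ0]; simp
      rw [hg']
      nlinarith [hsq]
    · have hgne : g ≠ 0 := by simpa [hg] using norm_ne_zero_iff.mpr hγ0
      set ζ₀ : ℂ := -conj γ / (g:ℂ) with hζ₀
      have hgC : (g:ℂ) ≠ 0 := by exact_mod_cast hgne
      have habs : ‖ζ₀‖ = 1 := by
        rw [hζ₀, norm_div, norm_neg, Complex.norm_conj, Complex.norm_real]
        rw [← hg, Real.norm_of_nonneg hg0]
        field_simp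
      have hγζ : γ * ζ₀ = ((-g : ℝ) : ℂ) := by
        rw [hζ₀]
        have hns : (Complex.normSq γ : ℂ) = ((g^2 : ℝ) : ℂ) := by
          norm_cast
          rw [Complex.normSq_eq_norm_sq]
        field_simp
        rw [Complex.mul_conj, hns]
        push_cast
        ring
      have hbz := hb ζ₀ habs
      have hsq : (‖c + d*ζ₀‖)^2 ≤ (‖a + b*ζ₀‖)^2 := by
        nlinarith [norm_nonneg (c + d*ζ₀), norm_nonneg (a + b*ζ₀)]
      rw [sq_expand, sq_expand, habs] at hsq
      have hre : (conj a * b * ζ₀).re = (conj c * d * ζ₀).re - g := by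
        have h3 : conj a * b * ζ₀ = conj c * d * ζ₀ + γ * ζ₀ := by rw [hγ]; ring
        rw [h3, hγζ, Complex.add_re, Complex.ofReal_re]
        ring
      nlinarith [hsq, hre]
  -- the key consequence: g ≥ B² - D²
  have hgb : B^2 - D^2 ≤ g := by
    rcases le_total C D with h | h
    · nlinarith [mul_nonneg hB0 (sub_nonneg.2 hba), mul_nonneg hD0 (sub_nonneg.2 h)]
    · by_contra hc
      push_neg at hc
      nlinarith [mul_nonneg hB0 (sub_nonneg.2 hba), mul_nonneg (sub_nonneg.2 h) (sub_nonneg.2 hba),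
        sq_nonneg (A - B - (C - D)), mul_nonneg hD0 (sub_nonneg.2 h)]
  -- conclusion
  intro ζ hζ
  have ht0 : 0 ≤ ‖ζ‖ := norm_nonneg ζ
  set t := ‖ζ‖ with htd
  have hsq : (‖c + d*ζ‖)^2 ≤ (‖a + b*ζ‖)^2 := by
    rw [sq_expand, sq_expand]
    have hre : -(g*t) ≤ (conj a * b * ζ).re - (conj c * d * ζ).re := by
      have h3 : (conj a * b * ζ) = (conj c * d * ζ) + γ * ζ := by rw [hγ]; ring
      have habs : ‖γ * ζ‖ = g * t := by rw [norm_mul]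
      have := (abs_le.mp (Complex.abs_re_le_norm (γ * ζ))).1
      rw [habs] at this
      rw [h3, Complex.add_re]
      linarith
    have P1 : 0 ≤ (g - (B^2 - D^2))*(1 - t^2) := by
      apply mul_nonneg (by linarith)
      nlinarith
    have P2 : 0 ≤ g*(1-t)^2 := mul_nonneg hg0 (sq_nonneg _)
    linarith [P1, P2, hre, h2]
  exact le_of_sq' (norm_nonneg _) hsq (norm_nonneg _)

/-- the key inequality as a predicate -/
private def Q (z x y w : ℂ) : Prop :=
  ‖x*y + y*w + w*x - 3*(x*y*w)*z‖ ≤ ‖3 - (x+y+w)*z‖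

private lemma Qswap23 {z x y w : ℂ} (h : Q z x y w) : Q z x w y := by
  unfold Q at *
  convert h using 2 <;> ring

private lemma Qswap12 {z x y w : ℂ} (h : Q z x y w) : Q z y x w := by
  unfold Q at *
  convert h using 2 <;> ring

/-- base case: all three points on the unit circle -/
private lemma Qbase (z x y w : ℂ) (hz : ‖z‖ ≤ 1) (hx : ‖x‖ = 1)
    (hy : ‖y‖ = 1) (hw : ‖w‖ = 1) : Q z x y w := by
  unfold Q
  have hux : x * conj x = 1 := by
    rw [Complex.mul_conj]; norm_cast; rw [Complex.normSq_eq_norm_sq, hx]; norm_num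
  have huy : y * conj y = 1 := by
    rw [Complex.mul_conj]; norm_cast; rw [Complex.normSq_eq_norm_sq, hy]; norm_num
  have huw : w * conj w = 1 := by
    rw [Complex.mul_conj]; norm_cast; rw [Complex.normSq_eq_norm_sq, hw]; norm_num
  have key : x*y + y*w + w*x - 3*(x*y*w)*z
      = (x*y*w) * ((conj x + conj y + conj w) - 3*z) := by
    linear_combination (-(y*w))*hux + (-(x*w))*huy + (-(x*y))*huw
  rw [key, norm_mul, norm_mul, norm_mul, hx, hy, hw]
  simp only [one_mul]
  set S : ℂ := x + y + w with hS
  have hcs : conj x + conj y + conj w = conj S := by rw [hS]; simp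
  rw [hcs]
  have hSa : ‖S‖ ≤ 3 := by
    calc ‖S‖ ≤ ‖x+y‖ + ‖w‖ := norm_add_le _ _
      _ ≤ ‖x‖ + ‖y‖ + ‖w‖ := by
          linarith [norm_add_le x y]
      _ = 3 := by rw [hx, hy, hw]; norm_num
  have hid : (‖3 - S*z‖)^2 - (‖conj S - 3*z‖)^2
      = (9 - (‖S‖)^2) * (1 - (‖z‖)^2) := by
    rw [Complex.sq_norm, Complex.sq_norm, Complex.sq_norm, Complex.sq_norm]
    simp [Complex.normSq_apply, Complex.sub_re, Complex.sub_im, Complex.mul_re, Complex.mul_im,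
      Complex.conj_re, Complex.conj_im]
    ring
  apply le_of_sq' (norm_nonneg _) _ (norm_nonneg _)
  have h9 : 0 ≤ 9 - (‖S‖)^2 := by nlinarith [norm_nonneg S]
  have hz1 : 0 ≤ 1 - (‖z‖)^2 := by nlinarith [norm_nonneg z]
  nlinarith [hid, mul_nonneg h9 hz1]

/-- peeling one variable off the circle into the disc -/
private lemma Qpeel (z u v : ℂ) (hz : ‖z‖ ≤ 1) (hu : ‖u‖ ≤ 1)
    (hv : ‖v‖ ≤ 1) (H : ∀ ζ : ℂ, ‖ζ‖ = 1 → Q z u v ζ) :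
    ∀ ζ : ℂ, ‖ζ‖ ≤ 1 → Q z u v ζ := by
  intro ζ hζ
  have key := mm (3 - (u+v)*z) (-z) (u*v) (u + v - 3*(u*v)*z) ?_ ?_ ζ hζ
  · unfold Q
    have e1 : u*v + (u + v - 3*(u*v)*z)*ζ = u*v + v*ζ + ζ*u - 3*(u*v*ζ)*z := by ring
    have e2 : 3 - (u+v)*z + (-z)*ζ = 3 - (u+v+ζ)*z := by ring
    rw [e1, e2] at key
    exact key
  · -- |−z| ≤ |3 − (u+v)z|
    rw [norm_neg]
    have h1 : ‖(u+v)*z‖ ≤ 2 := by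
      rw [norm_mul]
      have : ‖u+v‖ ≤ 2 := by linarith [norm_add_le u v]
      calc ‖u+v‖ * ‖z‖ ≤ 2 * 1 := by
            apply mul_le_mul this hz (norm_nonneg z) (by norm_num)
        _ = 2 := by norm_num
    have h3 : (3:ℝ) - ‖(u+v)*z‖ ≤ ‖3 - (u+v)*z‖ := by
      have := norm_add_le (3 - (u+v)*z) ((u+v)*z)
      simp only [sub_add_cancel] at this
      have h3' : ‖(3:ℂ)‖ = 3 := by norm_num [Complex.norm_ofNat]
      rw [h3'] at this
      linarith
    linarith
  · intro ζ' hζ'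
    have h := H ζ' hζ'
    unfold Q at h
    have e1 : u*v + v*ζ' + ζ'*u - 3*(u*v*ζ')*z = u*v + (u + v - 3*(u*v)*z)*ζ' := by ring
    have e2 : 3 - (u+v+ζ')*z = 3 - (u+v)*z + (-z)*ζ' := by ring
    rw [e1, e2] at h
    exact h

private lemma Qfull (z : ℂ) (hz : ‖z‖ ≤ 1) :
    ∀ x y w : ℂ, ‖x‖ ≤ 1 → ‖y‖ ≤ 1 → ‖w‖ ≤ 1 → Q z x y w := by
  -- step 1: two on the circle
  have s1 : ∀ x y : ℂ, ‖x‖ = 1 → ‖y‖ = 1 →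
      ∀ w : ℂ, ‖w‖ ≤ 1 → Q z x y w := by
    intro x y hx hy
    exact Qpeel z x y hz (le_of_eq hx) (le_of_eq hy)
      (fun ζ hζ => Qbase z x y ζ hz hx hy hζ)
  -- step 2: one on the circle
  have s2 : ∀ x : ℂ, ‖x‖ = 1 → ∀ y w : ℂ, ‖y‖ ≤ 1 →
      ‖w‖ ≤ 1 → Q z x y w := by
    intro x hx y w hy hw
    have := Qpeel z x w hz (le_of_eq hx) hw
      (fun ζ hζ => Qswap23 (s1 x ζ hx hζ w hw)) y hy
    exact Qswap23 this
  -- step 3: none on the circle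
  intro x y w hx hy hw
  have := Qpeel z y w hz hy hw
    (fun ζ hζ => Qswap23 (Qswap12 (s2 ζ hζ y w hy hw))) x hx
  exact Qswap12 (Qswap23 this)

/-- For a point of the closed symmetrized tridisc, `3 - s₁ z - s₂ w + 3 p z w` does not
vanish for `z, w` in the open unit disc. -/
theorem stmt12 (z₁ z₂ z₃ : ℂ) (h1 : ‖z₁‖ ≤ 1) (h2 : ‖z₂‖ ≤ 1)
    (h3 : ‖z₃‖ ≤ 1) (s₁ s₂ p : ℂ)
    (hs₁ : s₁ = z₁ + z₂ + z₃) (hs₂ : s₂ = z₁ * z₂ + z₂ * z₃ + z₃ * z₁)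
    (hp : p = z₁ * z₂ * z₃) :
    ∀ z w : ℂ, ‖z‖ < 1 → ‖w‖ < 1 →
      3 - s₁ * z - s₂ * w + 3 * p * z * w ≠ 0 := by
  intro z w hz hw hF
  have hQ := Qfull z (le_of_lt hz) z₁ z₂ z₃ h1 h2 h3
  unfold Q at hQ
  -- rewrite hQ in terms of s₁, s₂, p
  have hQ' : ‖s₂ - 3*p*z‖ ≤ ‖3 - s₁*z‖ := by
    have e1 : s₂ - 3*p*z = z₁*z₂ + z₂*z₃ + z₃*z₁ - 3*(z₁*z₂*z₃)*z := by
      rw [hs₂, hp]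
    have e2 : (3:ℂ) - s₁*z = 3 - (z₁+z₂+z₃)*z := by rw [hs₁]
    rw [e1, e2]
    exact hQ
  -- |3 - s₁ z| > 0
  have hs1abs : ‖s₁‖ ≤ 3 := by
    rw [hs₁]
    calc ‖z₁+z₂+z₃‖ ≤ ‖z₁+z₂‖ + ‖z₃‖ :=
          norm_add_le _ _
      _ ≤ ‖z₁‖ + ‖z₂‖ + ‖z₃‖ := by
          linarith [norm_add_le z₁ z₂]
      _ ≤ 3 := by linarith
  have hpos : 0 < ‖3 - s₁*z‖ := by
    have h1' : ‖s₁*z‖ < 3 := by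
      rw [norm_mul]
      calc ‖s₁‖ * ‖z‖ ≤ 3 * ‖z‖ := by
            apply mul_le_mul_of_nonneg_right hs1abs (norm_nonneg z)
        _ < 3 * 1 := by
            apply mul_lt_mul_of_pos_left hz (by norm_num)
        _ = 3 := by norm_num
    have h2' : (3:ℝ) - ‖s₁*z‖ ≤ ‖3 - s₁*z‖ := by
      have := norm_add_le (3 - s₁*z) (s₁*z)
      simp only [sub_add_cancel] at this
      have h3' : ‖(3:ℂ)‖ = 3 := by norm_num [Complex.norm_ofNat]
      rw [h3'] at this
      linarith
    linarith
  -- from hF : 3 - s₁ z = w (s₂ - 3 p z)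
  have hEq : 3 - s₁*z = w*(s₂ - 3*p*z) := by linear_combination hF
  have hAbsEq : ‖3 - s₁*z‖ = ‖w‖ * ‖s₂ - 3*p*z‖ := by
    rw [hEq, norm_mul]
  have hwnn : 0 ≤ ‖w‖ := norm_nonneg w
  nlinarith [hQ', hAbsEq, hpos, hw, hwnn, norm_nonneg (s₂ - 3*p*z)]
end

section
/- If B is a 2×2 complex matrix with operator norm ‖B‖ ≤ 1, then the point (3b₁₁, 3b₂₂, det B) lies in the closed symmetrized tridisc Γ₃, i.e., satisfies |s₁ - s̄₂p| + |s₂ - s̄₁p| ≤ 3(1 - |p|²) with s₁ = 3b₁₁, s₂ = 3b₂₂, p = det B. -/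
open scoped Matrix.Norms.L2Operator
open scoped Matrix

/-- Scalar symmetrized-bidisc inequality: if `μ, ν` lie in the closed unit disc, then
`|s - s̄ q| ≤ 1 - |q|²` where `s = μ + ν`, `q = μν`. -/
lemma scalar_gamma2 (μ ν : ℂ) (hμ : ‖μ‖ ≤ 1) (hν : ‖ν‖ ≤ 1) :
    ‖(μ + ν) - (starRingEnd ℂ) (μ + ν) * (μ * ν)‖ ≤ 1 - ‖μ * ν‖ ^ 2 := by
  have key : (μ + ν) - (starRingEnd ℂ) (μ + ν) * (μ * ν)
      = μ * (1 - ν * (starRingEnd ℂ) ν) + ν * (1 - μ * (starRingEnd ℂ) μ) := by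
    rw [map_add]; ring
  have hμc : μ * (starRingEnd ℂ) μ = ((‖μ‖ ^ 2 : ℝ) : ℂ) := by
    rw [Complex.mul_conj, Complex.sq_norm]
  have hνc : ν * (starRingEnd ℂ) ν = ((‖ν‖ ^ 2 : ℝ) : ℂ) := by
    rw [Complex.mul_conj, Complex.sq_norm]
  rw [key, hμc, hνc]
  have h0μ : (0 : ℝ) ≤ ‖μ‖ := norm_nonneg μ
  have h0ν : (0 : ℝ) ≤ ‖ν‖ := norm_nonneg ν
  have h1 : ‖μ * (1 - ((‖ν‖ ^ 2 : ℝ) : ℂ))‖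
      = ‖μ‖ * (1 - ‖ν‖ ^ 2) := by
    rw [norm_mul]
    congr 1
    have : ((1 : ℝ) - ‖ν‖ ^ 2 : ℝ) = ‖(1 : ℂ) - ((‖ν‖ ^ 2 : ℝ) : ℂ)‖ := by
      rw [show (1 : ℂ) - ((‖ν‖ ^ 2 : ℝ) : ℂ) = (((1 - ‖ν‖ ^ 2 : ℝ)) : ℂ) by
        push_cast; ring, Complex.norm_real, Real.norm_eq_abs, abs_of_nonneg (by nlinarith)]
    linarith [this]
  have h2 : ‖ν * (1 - ((‖μ‖ ^ 2 : ℝ) : ℂ))‖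
      = ‖ν‖ * (1 - ‖μ‖ ^ 2) := by
    rw [norm_mul]
    congr 1
    have : ((1 : ℝ) - ‖μ‖ ^ 2 : ℝ) = ‖(1 : ℂ) - ((‖μ‖ ^ 2 : ℝ) : ℂ)‖ := by
      rw [show (1 : ℂ) - ((‖μ‖ ^ 2 : ℝ) : ℂ) = (((1 - ‖μ‖ ^ 2 : ℝ)) : ℂ) by
        push_cast; ring, Complex.norm_real, Real.norm_eq_abs, abs_of_nonneg (by nlinarith)]
    linarith [this]
  calc ‖μ * (1 - ((‖ν‖ ^ 2 : ℝ) : ℂ)) + ν * (1 - ((‖μ‖ ^ 2 : ℝ) : ℂ))‖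
      ≤ ‖μ * (1 - ((‖ν‖ ^ 2 : ℝ) : ℂ))‖
        + ‖ν * (1 - ((‖μ‖ ^ 2 : ℝ) : ℂ))‖ := norm_add_le _ _
    _ = ‖μ‖ * (1 - ‖ν‖ ^ 2) + ‖ν‖ * (1 - ‖μ‖ ^ 2) := by
        rw [h1, h2]
    _ ≤ 1 - ‖μ * ν‖ ^ 2 := by
        rw [norm_mul]
        have hxy : ‖μ‖ * ‖ν‖ ≤ 1 := by nlinarith
        nlinarith [mul_nonneg (mul_nonneg (sub_nonneg.2 hμ) (sub_nonneg.2 hν))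
          (sub_nonneg.2 hxy)]

/-- Any root of the characteristic quadratic of a `2×2` matrix has modulus at most the
operator norm (times `‖1‖ = 1`). -/
lemma root_abs_le (C : Matrix (Fin 2) (Fin 2) ℂ) (hC : ‖C‖ ≤ 1) (z : ℂ)
    (hz : z ^ 2 - (C 0 0 + C 1 1) * z + C.det = 0) : ‖z‖ ≤ 1 := by
  have hmem : z ∈ spectrum ℂ C := by
    rw [spectrum.mem_iff]
    intro hunit
    rw [Matrix.isUnit_iff_isUnit_det] at hunit
    have hdet : (algebraMap ℂ (Matrix (Fin 2) (Fin 2) ℂ) z - C).det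
        = z ^ 2 - (C 0 0 + C 1 1) * z + C.det := by
      rw [Matrix.det_fin_two, Matrix.det_fin_two]
      simp [Matrix.algebraMap_matrix_apply]
      ring
    rw [hdet, hz] at hunit
    exact hunit.ne_zero rfl
  have hone : ‖(1 : Matrix (Fin 2) (Fin 2) ℂ)‖ = 1 := CStarRing.norm_one
  have := spectrum.norm_le_norm_mul_of_mem hmem
  rw [hone, mul_one] at this
  calc ‖z‖ = ‖z‖ := rfl
    _ ≤ ‖C‖ := this
    _ ≤ 1 := hC

/-- The `Γ₂` inequality for a contractive `2×2` complex matrix, applied to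
`(tr C, det C)`. -/
lemma gamma2_of_contraction (C : Matrix (Fin 2) (Fin 2) ℂ) (hC : ‖C‖ ≤ 1) :
    ‖(C 0 0 + C 1 1) - (starRingEnd ℂ) (C 0 0 + C 1 1) * C.det‖
      ≤ 1 - ‖C.det‖ ^ 2 := by
  obtain ⟨w, hw⟩ := IsAlgClosed.exists_pow_nat_eq (k := ℂ)
    ((C 0 0 + C 1 1) ^ 2 - 4 * C.det) (n := 2) (by norm_num)
  have hμroot : ((C 0 0 + C 1 1 + w) / 2) ^ 2
      - (C 0 0 + C 1 1) * ((C 0 0 + C 1 1 + w) / 2) + C.det = 0 := by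
    linear_combination hw / 4
  have hνroot : ((C 0 0 + C 1 1 - w) / 2) ^ 2
      - (C 0 0 + C 1 1) * ((C 0 0 + C 1 1 - w) / 2) + C.det = 0 := by
    linear_combination hw / 4
  have hμ1 := root_abs_le C hC _ hμroot
  have hν1 := root_abs_le C hC _ hνroot
  have hmain := scalar_gamma2 _ _ hμ1 hν1
  have hsum : (C 0 0 + C 1 1 + w) / 2 + (C 0 0 + C 1 1 - w) / 2 = C 0 0 + C 1 1 := by
    ring
  have hprod : (C 0 0 + C 1 1 + w) / 2 * ((C 0 0 + C 1 1 - w) / 2) = C.det := by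
    linear_combination -hw / 4
  rw [hsum, hprod] at hmain
  exact hmain

/-- Multiplying on the left by `diagonal ![1, λ]` with `|λ| = 1` preserves the `L²` operator
norm. -/
lemma norm_diag_mul (B : Matrix (Fin 2) (Fin 2) ℂ) (lam : ℂ) (hlam : ‖lam‖ = 1) :
    ‖Matrix.diagonal ![1, lam] * B‖ = ‖B‖ := by
  have hll : (starRingEnd ℂ) lam * lam = 1 := by
    have h1 : lam * (starRingEnd ℂ) lam = ((Complex.normSq lam : ℝ) : ℂ) := Complex.mul_conj lam
    have h2 : Complex.normSq lam = 1 := by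
      rw [← Complex.sq_norm, hlam]; norm_num
    rw [h2] at h1
    calc (starRingEnd ℂ) lam * lam = lam * (starRingEnd ℂ) lam := by rw [mul_comm]
      _ = 1 := by rw [h1]; norm_num
  have hDdag : (Matrix.diagonal ![1, lam])ᴴ * Matrix.diagonal ![1, lam]
      = (1 : Matrix (Fin 2) (Fin 2) ℂ) := by
    ext i j
    fin_cases i <;> fin_cases j <;>
      simp [Matrix.mul_apply, Fin.sum_univ_two, Matrix.conjTranspose_apply,
        Matrix.diagonal_apply, Matrix.one_apply, hll]
  have key : ‖Matrix.diagonal ![1, lam] * B‖ * ‖Matrix.diagonal ![1, lam] * B‖ = ‖B‖ * ‖B‖ := by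
    rw [← Matrix.l2_opNorm_conjTranspose_mul_self, ← Matrix.l2_opNorm_conjTranspose_mul_self B]
    congr 1
    rw [Matrix.conjTranspose_mul]
    calc Bᴴ * (Matrix.diagonal ![1, lam])ᴴ * (Matrix.diagonal ![1, lam] * B)
        = Bᴴ * ((Matrix.diagonal ![1, lam])ᴴ * Matrix.diagonal ![1, lam]) * B := by
          rw [Matrix.mul_assoc, Matrix.mul_assoc, Matrix.mul_assoc]
      _ = Bᴴ * B := by rw [hDdag, Matrix.mul_one]
  have h1 : (0 : ℝ) ≤ ‖Matrix.diagonal ![1, lam] * B‖ := norm_nonneg _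
  have h2 : (0 : ℝ) ≤ ‖B‖ := norm_nonneg _
  nlinarith

/-- If `B` is a `2 × 2` complex matrix with operator norm at most `1`, then
`(3 b₁₁, 3 b₂₂, det B)` satisfies the metric inequality characterizing the closed
symmetrized tridisc. -/
theorem stmt13 (B : Matrix (Fin 2) (Fin 2) ℂ) (hB : ‖B‖ ≤ 1)
    (s₁ s₂ p : ℂ) (hs₁ : s₁ = 3 * B 0 0) (hs₂ : s₂ = 3 * B 1 1) (hp : p = B.det) :
    ‖s₁ - (starRingEnd ℂ) s₂ * p‖ + ‖s₂ - (starRingEnd ℂ) s₁ * p‖ ≤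
      3 * (1 - ‖p‖ ^ 2) := by
  subst hs₁ hs₂ hp
  set a : ℂ := B 0 0 with ha
  set d : ℂ := B 1 1 with hd
  set p : ℂ := B.det with hp
  -- let z and w be the two (unscaled) terms
  set z : ℂ := a - (starRingEnd ℂ) d * p with hz
  set wterm : ℂ := d - (starRingEnd ℂ) a * p with hwterm
  -- choose unimodular λ aligning the phases of z and wterm
  set lam : ℂ := (if z = 0 then 1 else z / ‖z‖) *
      (starRingEnd ℂ) (if wterm = 0 then 1 else wterm / ‖wterm‖) with hlamdef
  have habs_sgn : ∀ u : ℂ, ‖if u = 0 then 1 else u / ‖u‖‖ = 1 := by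
    intro u
    by_cases hu : u = 0
    · simp [hu]
    · rw [if_neg hu, norm_div, Complex.norm_real, Real.norm_eq_abs, abs_of_nonneg (norm_nonneg u),
        div_self ((norm_ne_zero_iff.mpr hu))]
  have hlam : ‖lam‖ = 1 := by
    rw [hlamdef, norm_mul, Complex.norm_conj, habs_sgn, habs_sgn, mul_one]
  -- the key alignment identity : |z| + |wterm| = |z + lam * wterm|
  have halign : ‖z‖ + ‖wterm‖ = ‖z + lam * wterm‖ := by
    by_cases hz0 : z = 0
    · by_cases hw0 : wterm = 0
      · simp [hz0, hw0]
      · rw [hz0]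
        simp only [map_zero, norm_zero, zero_add]
        rw [norm_mul, hlam, one_mul]
    · by_cases hw0 : wterm = 0
      · rw [hw0]
        simp
      · have hzabs : (‖z‖ : ℂ) ≠ 0 := by
          simpa using (norm_ne_zero_iff.mpr hz0)
        have hwabs : (‖wterm‖ : ℂ) ≠ 0 := by
          simpa using (norm_ne_zero_iff.mpr hw0)
        have hconj : (starRingEnd ℂ) (wterm / (‖wterm‖ : ℂ)) * wterm
            = ((‖wterm‖ : ℝ) : ℂ) := by
          rw [map_div₀, Complex.conj_ofReal, div_mul_eq_mul_div, mul_comm,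
            Complex.mul_conj, ← Complex.sq_norm]
          push_cast
          rw [pow_two, mul_div_assoc, div_self hwabs, mul_one]
        have hexp : z + lam * wterm
            = z * ((((‖z‖ + ‖wterm‖ : ℝ)) : ℂ) / (‖z‖ : ℂ)) := by
          rw [hlamdef, if_neg hz0, if_neg hw0, mul_assoc, hconj]
          push_cast
          field_simp
        rw [hexp, norm_mul, norm_div, Complex.norm_real, Real.norm_eq_abs, Complex.norm_real, Real.norm_eq_abs,
          abs_of_nonneg (by positivity : (0:ℝ) ≤ ‖z‖ + ‖wterm‖),
          abs_of_nonneg (norm_nonneg z)]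
        rw [mul_div_assoc']
        rw [mul_comm]
        rw [mul_div_assoc]
        rw [div_self ((norm_ne_zero_iff.mpr hz0)), mul_one]
  -- apply the Γ₂ lemma to C = diagonal ![1, lam] * B
  set C : Matrix (Fin 2) (Fin 2) ℂ := Matrix.diagonal ![1, lam] * B with hC
  have hCnorm : ‖C‖ ≤ 1 := by
    rw [hC, norm_diag_mul B lam hlam]; exact hB
  have hC00 : C 0 0 = a := by
    rw [hC, Matrix.diagonal_mul]
    simp [ha]
  have hC11 : C 1 1 = lam * d := by
    rw [hC, Matrix.diagonal_mul]
    simp [hd]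
  have hCdet : C.det = lam * p := by
    rw [hC, Matrix.det_mul, hp]
    congr 1
    rw [Matrix.det_fin_two]
    simp
  have hG := gamma2_of_contraction C hCnorm
  rw [hC00, hC11, hCdet] at hG
  -- rewrite tr C - conj(tr C) * det C = z + lam * wterm
  have hkey : (a + lam * d) - (starRingEnd ℂ) (a + lam * d) * (lam * p) = z + lam * wterm := by
    rw [hz, hwterm, map_add, map_mul]
    have hlc : (starRingEnd ℂ) lam * lam = 1 := by
      rw [mul_comm, Complex.mul_conj, ← Complex.sq_norm, hlam]
      norm_num
    calc (a + lam * d) - ((starRingEnd ℂ) a + (starRingEnd ℂ) lam * (starRingEnd ℂ) d) * (lam * p)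
        = a - ((starRingEnd ℂ) lam * lam) * (starRingEnd ℂ) d * p
          + lam * (d - (starRingEnd ℂ) a * p) := by ring
      _ = a - (starRingEnd ℂ) d * p + lam * (d - (starRingEnd ℂ) a * p) := by
          rw [hlc, one_mul]
  rw [hkey] at hG
  have habslam : ‖lam * p‖ = ‖p‖ := by
    rw [norm_mul, hlam, one_mul]
  rw [habslam] at hG
  -- conclude
  have h3z : 3 * a - (starRingEnd ℂ) (3 * d) * p = 3 * z := by
    rw [hz, map_mul]
    have h3c : (starRingEnd ℂ) (3 : ℂ) = 3 := by
      rw [show (3 : ℂ) = ((3 : ℝ) : ℂ) by norm_num, Complex.conj_ofReal]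
    rw [h3c]; ring
  have h3w : 3 * d - (starRingEnd ℂ) (3 * a) * p = 3 * wterm := by
    rw [hwterm, map_mul]
    have h3c : (starRingEnd ℂ) (3 : ℂ) = 3 := by
      rw [show (3 : ℂ) = ((3 : ℝ) : ℂ) by norm_num, Complex.conj_ofReal]
    rw [h3c]; ring
  rw [h3z, h3w, norm_mul, norm_mul]
  have h3 : ‖(3 : ℂ)‖ = 3 := by
    rw [show (3 : ℂ) = ((3 : ℝ) : ℂ) by norm_num, Complex.norm_real, Real.norm_eq_abs]
    norm_num
  rw [h3]
  have := halign
  nlinarith [norm_nonneg z, norm_nonneg wterm]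
end

section
/- Let (S₁,S₂,P) on H and (S₁',S₂',P') on H' be commuting triples with P, P' contractions, with fundamental operator pairs (A₁,A₂) and (A₁',A₂') respectively (so S₁ - S₂*P = D_P A₁ D_P etc., and A_i, A_i' act on the closures of the ranges of D_P, D_{P'}). If U : H → H' is a unitary with U S₁ = S₁' U, U S₂ = S₂' U, U P = P' U, then the restriction Ũ of U to the closure of Ran D_P is a unitary onto the closure of Ran D_{P'} satisfying Ũ A₁ Ũ* = A₁' and Ũ A₂ Ũ* = A₂'. -/
set_option synthInstance.maxHeartbeats 1000000
set_option maxHeartbeats 1000000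
set_option linter.unusedSectionVars false

open ContinuousLinearMap
open scoped InnerProductSpace

variable {H : Type*} [NormedAddCommGroup H] [InnerProductSpace ℂ H] [CompleteSpace H]

lemma mem_defectSpace (D : H →L[ℂ] H) (h : H) : D h ∈ defectSpace D :=
  Submodule.le_topologicalClosure _ (LinearMap.mem_range_self (D : H →ₗ[ℂ] H) h)

section aux
variable {H' : Type*} [NormedAddCommGroup H'] [InnerProductSpace ℂ H'] [CompleteSpace H']

lemma aux_adj_intertwine (U : H ≃ₗᵢ[ℂ] H') (T : H →L[ℂ] H) (T' : H' →L[ℂ] H')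
    (h : ∀ x, U (T x) = T' (U x)) (x : H) :
    U (adjoint T x) = adjoint T' (U x) := by
  apply ext_inner_right ℂ
  intro y
  rw [adjoint_inner_left]
  calc ⟪(U (adjoint T x) : H'), y⟫_ℂ
      = ⟪U (adjoint T x), U (U.symm y)⟫_ℂ := by rw [U.apply_symm_apply]
    _ = ⟪adjoint T x, U.symm y⟫_ℂ := U.inner_map_map _ _
    _ = ⟪x, T (U.symm y)⟫_ℂ := adjoint_inner_left ..
    _ = ⟪U x, U (T (U.symm y))⟫_ℂ := (U.inner_map_map _ _).symm
    _ = ⟪U x, T' y⟫_ℂ := by rw [h, U.apply_symm_apply]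

lemma aux_map_defect (U : H ≃ₗᵢ[ℂ] H') (D : H →L[ℂ] H) (D' : H' →L[ℂ] H')
    (key : ∀ h, U (D h) = D' (U h)) {x : H} (hx : x ∈ defectSpace D) :
    U x ∈ defectSpace D' := by
  have hsub : LinearMap.range (D : H →ₗ[ℂ] H) ≤
      (defectSpace D').comap (U.toLinearEquiv : H →ₗ[ℂ] H') := by
    rintro _ ⟨h, rfl⟩
    simpa [Submodule.mem_comap, key] using mem_defectSpace D' (U h)
  have hclosed : IsClosed (((defectSpace D').comap (U.toLinearEquiv : H →ₗ[ℂ] H') : Set H)) := by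
    have : (((defectSpace D').comap (U.toLinearEquiv : H →ₗ[ℂ] H')) : Set H)
        = ⇑U ⁻¹' (defectSpace D' : Set H') := rfl
    rw [this]
    exact (Submodule.isClosed_topologicalClosure _).preimage U.continuous
  exact Submodule.topologicalClosure_minimal _ hsub hclosed hx

lemma aux_inj (D' : H' →L[ℂ] H') (hD' : D'.IsPositive)
    (y z : defectSpace D') (hyz : D' (y : H') = D' (z : H')) : y = z := by
  have hsa : ∀ a b : H', ⟪D' a, b⟫_ℂ = ⟪a, D' b⟫_ℂ := by
    intro a b
    conv_lhs => rw [← hD'.isSelfAdjoint.adjoint_eq]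
    exact adjoint_inner_left ..
  set u : H' := ((y - z : defectSpace D') : H') with hu
  have h0 : D' u = 0 := by
    simp only [hu, Submodule.coe_sub, map_sub, hyz, sub_self]
  have horth : (defectSpace D' : Set H') ⊆ {w : H' | ⟪u, w⟫_ℂ = 0} := by
    have hsubset : (LinearMap.range (D' : H' →ₗ[ℂ] H') : Set H') ⊆ {w : H' | ⟪u, w⟫_ℂ = 0} := by
      rintro _ ⟨v, rfl⟩
      show ⟪u, D' v⟫_ℂ = 0
      rw [← hsa, h0, inner_zero_left]
    have hclosed : IsClosed {w : H' | ⟪u, w⟫_ℂ = 0} :=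
      isClosed_eq (Continuous.inner continuous_const continuous_id) continuous_const
    calc (defectSpace D' : Set H') = closure (LinearMap.range (D' : H' →ₗ[ℂ] H') : Set H') :=
          Submodule.topologicalClosure_coe _
      _ ⊆ {w : H' | ⟪u, w⟫_ℂ = 0} := closure_minimal hsubset hclosed
  have huu : ⟪u, u⟫_ℂ = 0 := horth (y - z).2
  have h1 : u = 0 := inner_self_eq_zero.mp huu
  have h2 : (y - z : defectSpace D') = 0 := Subtype.ext h1
  exact sub_eq_zero.mp h2

lemma aux_dense (D : H →L[ℂ] H) :
    Dense {x : defectSpace D | ∃ h : H, (x : H) = D h} := by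
  intro x
  rw [closure_subtype]
  have hsub : (LinearMap.range (D : H →ₗ[ℂ] H) : Set H)
      ⊆ (↑) '' {x : defectSpace D | ∃ h : H, (x : H) = D h} := by
    rintro _ ⟨h, rfl⟩
    exact ⟨⟨D h, mem_defectSpace D h⟩, ⟨h, rfl⟩, rfl⟩
  have hx : (x : H) ∈ closure (LinearMap.range (D : H →ₗ[ℂ] H) : Set H) := by
    have h2 := x.2
    rw [← Submodule.topologicalClosure_coe]
    exact h2
  exact closure_mono hsub hx

end aux

/-- A unitary equivalence of commuting triples intertwines their fundamental operator
pairs: if `U S₁ = S₁' U`, `U S₂ = S₂' U`, `U P = P' U`, then `U` restricts to a unitary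
`Ũ : 𝒟_P → 𝒟_{P'}` with `Ũ A₁ Ũ* = A₁'` and `Ũ A₂ Ũ* = A₂'`. -/
theorem stmt17 {H' : Type*} [NormedAddCommGroup H'] [InnerProductSpace ℂ H']
    [CompleteSpace H']
    (S₁ S₂ P D : H →L[ℂ] H) (S₁' S₂' P' D' : H' →L[ℂ] H')
    (hc12 : S₁ * S₂ = S₂ * S₁) (hc1P : S₁ * P = P * S₁) (hc2P : S₂ * P = P * S₂)
    (hc12' : S₁' * S₂' = S₂' * S₁') (hc1P' : S₁' * P' = P' * S₁')
    (hc2P' : S₂' * P' = P' * S₂')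
    (hP : ‖P‖ ≤ 1) (hP' : ‖P'‖ ≤ 1)
    (hD : D.IsPositive) (hD2 : D * D = 1 - adjoint P * P)
    (hD' : D'.IsPositive) (hD'2 : D' * D' = 1 - adjoint P' * P')
    (A₁ A₂ : defectSpace D →L[ℂ] defectSpace D)
    (A₁' A₂' : defectSpace D' →L[ℂ] defectSpace D')
    (hA1 : ∀ h : H, S₁ h - adjoint S₂ (P h) = D (A₁ ⟨D h, mem_defectSpace D h⟩ : H))
    (hA2 : ∀ h : H, S₂ h - adjoint S₁ (P h) = D (A₂ ⟨D h, mem_defectSpace D h⟩ : H))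
    (hA1' : ∀ h : H', S₁' h - adjoint S₂' (P' h) = D' (A₁' ⟨D' h, mem_defectSpace D' h⟩ : H'))
    (hA2' : ∀ h : H', S₂' h - adjoint S₁' (P' h) = D' (A₂' ⟨D' h, mem_defectSpace D' h⟩ : H'))
    (U : H ≃ₗᵢ[ℂ] H')
    (hU1 : ∀ h, U (S₁ h) = S₁' (U h)) (hU2 : ∀ h, U (S₂ h) = S₂' (U h))
    (hUP : ∀ h, U (P h) = P' (U h)) :
    ∃ V : defectSpace D ≃ₗᵢ[ℂ] defectSpace D',
      (∀ x : defectSpace D, (V x : H') = U (x : H)) ∧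
      (∀ x : defectSpace D, V (A₁ x) = A₁' (V x)) ∧
      (∀ x : defectSpace D, V (A₂ x) = A₂' (V x)) := by
  have hDD : ∀ y, D (D y) = y - adjoint P (P y) := by
    intro y
    simpa [mul_apply, sub_apply, one_apply] using ContinuousLinearMap.ext_iff.mp hD2 y
  have hDD' : ∀ y, D' (D' y) = y - adjoint P' (P' y) := by
    intro y
    simpa [mul_apply, sub_apply, one_apply] using ContinuousLinearMap.ext_iff.mp hD'2 y
  set Uc : H →L[ℂ] H' := U.toLinearIsometry.toContinuousLinearMap with hUc
  have hUc_apply : ∀ x, Uc x = U x := fun _ => rfl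
  have hadjU : adjoint Uc = U.symm.toLinearIsometry.toContinuousLinearMap := by
    symm
    rw [eq_adjoint_iff]
    intro x y
    show ⟪(U.symm x : H), y⟫_ℂ = ⟪x, (U y : H')⟫_ℂ
    rw [← U.inner_map_map (U.symm x) y, U.apply_symm_apply]
  have hadjU_apply : ∀ x, adjoint Uc x = U.symm x := by
    intro x; rw [hadjU]; rfl
  set T : H' →L[ℂ] H' := Uc ∘L D ∘L adjoint Uc with hT
  have hTpos : T.IsPositive := hD.conj_adjoint Uc
  have hTapp : ∀ x, T x = U (D (U.symm x)) := by
    intro x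
    rw [hT]
    simp [comp_apply, hadjU_apply, hUc_apply]
  have hT2 : T * T = D' * D' := by
    ext x
    rw [ContinuousLinearMap.mul_apply, ContinuousLinearMap.mul_apply, hTapp, hTapp, U.symm_apply_apply, hDD, map_sub,
      aux_adj_intertwine U P P' hUP, hUP]
    simp only [LinearIsometryEquiv.apply_symm_apply]
    rw [hDD']
  have hTD' : T = D' := by
    have h1 : CFC.sqrt (D' * D') = D' := CFC.sqrt_mul_self D' ((nonneg_iff_isPositive D').mpr hD')
    have h2 : CFC.sqrt (T * T) = T := CFC.sqrt_mul_self T ((nonneg_iff_isPositive T).mpr hTpos)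
    rw [hT2] at h2
    exact h2.symm.trans h1
  have key : ∀ h, U (D h) = D' (U h) := by
    intro h
    have h3 := ContinuousLinearMap.ext_iff.mp hTD' (U h)
    rw [hTapp, U.symm_apply_apply] at h3
    exact h3
  have key' : ∀ h', U.symm (D' h') = D (U.symm h') := by
    intro h'
    apply U.injective
    rw [U.apply_symm_apply, key, U.apply_symm_apply]
  let V : defectSpace D ≃ₗᵢ[ℂ] defectSpace D' :=
    { toFun := fun x => ⟨U x, aux_map_defect U D D' key x.2⟩
      map_add' := fun x y => Subtype.ext (by simp)
      map_smul' := fun c x => Subtype.ext (by simp)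
      invFun := fun y => ⟨U.symm y, aux_map_defect U.symm D' D key' y.2⟩
      left_inv := fun x => Subtype.ext (by simp)
      right_inv := fun y => Subtype.ext (by simp)
      norm_map' := fun x => U.norm_map x }
  have hVc : ∀ y : defectSpace D, ((V y : defectSpace D') : H') = U (y : H) := fun _ => rfl
  have step : ∀ (B : defectSpace D →L[ℂ] defectSpace D)
      (B' : defectSpace D' →L[ℂ] defectSpace D'),
      (∀ h : H, U (D (B ⟨D h, mem_defectSpace D h⟩ : H))
        = D' ((B' ⟨D' (U h), mem_defectSpace D' (U h)⟩ : H'))) →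
      ∀ x : defectSpace D, V (B x) = B' (V x) := by
    intro B B' hBB'
    have heq : Set.EqOn (fun x => V (B x)) (fun x => B' (V x))
        {x : defectSpace D | ∃ h : H, (x : H) = D h} := by
      rintro x ⟨h, hx⟩
      have hx' : x = ⟨D h, mem_defectSpace D h⟩ := Subtype.ext hx
      simp only []
      rw [hx']
      have hV : V ⟨D h, mem_defectSpace D h⟩ = ⟨D' (U h), mem_defectSpace D' (U h)⟩ :=
        Subtype.ext (key h)
      refine aux_inj D' hD' _ _ ?_
      rw [hV, hVc, ← key]
      exact hBB' h
    have hcont1 : Continuous (fun x : defectSpace D => V (B x)) :=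
      V.continuous.comp B.continuous
    have hcont2 : Continuous (fun x : defectSpace D => B' (V x)) :=
      B'.continuous.comp V.continuous
    have hfg := Continuous.ext_on (aux_dense D) hcont1 hcont2 heq
    intro x
    exact congrFun hfg x
  refine ⟨V, fun x => rfl, step A₁ A₁' ?_, step A₂ A₂' ?_⟩
  · intro h
    rw [← hA1 h, map_sub, hU1, aux_adj_intertwine U S₂ S₂' hU2, hUP, hA1' (U h)]
  · intro h
    rw [← hA2 h, map_sub, hU2, aux_adj_intertwine U S₁ S₁' hU1, hUP, hA2' (U h)]
end

section
/- Let P be a contraction on H with characteristic function Θ_P(z) = -P + z D_{P*}(I - zP)^{-1} D_P (restricted appropriately), and suppose (A₁,A₂), (B₁,B₂) are the fundamental operator pairs of a Γ₃-contraction (S₁,S₂,P) and its adjoint, satisfying the standard identities D_P S₁ = A₁D_P + A₂*D_P P, D_P S₂ = A₂D_P + A₁*D_P P, P A_i = B_i* P on Ran D_P, D_P A₁ = (S₁D_P - D_{P*}B₂P) on Ran D_P, D_P A₂ = (S₂D_P - D_{P*}B₁P) on Ran D_P, (A₁*D_PD_{P*} - A₂P*) = D_PD_{P*}B₁ - P*B₂*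 on Ran D_{P*}, and (A₂*D_PD_{P*} - A₁P*) = D_PD_{P*}B₂ - P*B₁* on Ran D_{P*}. Then for all z ∈ 𝔻: (A₁* + A₂ z) Θ_{P*}(z) = Θ_{P*}(z) (B₁ + B₂* z), where Θ_{P*}(z) = -P* + ∑_{n≥0} z^{n+1} D_P Pⁿ D_{P*}. -/
open ContinuousLinearMap

variable {H : Type*} [NormedAddCommGroup H] [InnerProductSpace ℂ H] [CompleteSpace H]

open Polynomial

private lemma cfc_sqrt_sq' (d : H →L[ℂ] H) (hd : d.IsPositive) : cfc Real.sqrt (d * d) = d := by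
  have hd0 : (0 : H →L[ℂ] H) ≤ d := (d.nonneg_iff_isPositive).2 hd
  have hsa : IsSelfAdjoint d := IsSelfAdjoint.of_nonneg hd0
  have h1 : d * d = cfc (fun t : ℝ => t ^ 2) d := by
    rw [cfc_pow_id d 2, sq]
  rw [h1, ← cfc_comp' Real.sqrt (fun t : ℝ => t ^ 2) d (by fun_prop)]
  have : ∀ t ∈ spectrum ℝ d, Real.sqrt (t ^ 2) = t := fun t ht => by
    rw [Real.sqrt_sq (spectrum_nonneg_of_nonneg hd0 ht)]
  rw [cfc_congr this, cfc_id' ℝ d]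

private lemma intertwine_cfc [Nontrivial H] {a b x : H →L[ℂ] H} (ha : IsSelfAdjoint a)
    (hb : IsSelfAdjoint b) (hx : x * a = b * x) {f : ℝ → ℝ} (hf : Continuous f) :
    x * cfc f a = cfc f b * x := by
  have hpow : ∀ n : ℕ, x * a ^ n = b ^ n * x := by
    intro n
    induction n with
    | zero => simp
    | succ n ih => rw [pow_succ, pow_succ, ← mul_assoc, ih, mul_assoc, hx, ← mul_assoc]
  have hpoly : ∀ q : ℝ[X], x * aeval a q = aeval b q * x := by
    intro q
    induction q using Polynomial.induction_on' with
    | add p q hp hq => simp only [map_add, mul_add, add_mul, hp, hq]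
    | monomial n r =>
      simp only [aeval_monomial]
      rw [← mul_assoc, ← Algebra.commutes r x, mul_assoc, hpow n, ← mul_assoc]
  have key : ∀ ε : ℝ, 0 < ε → ‖x * cfc f a - cfc f b * x‖ ≤ 0 + ε := by
    intro ε hε
    set M : ℝ := max ‖a‖ ‖b‖ with hM
    have hsubab : ∀ c : H →L[ℂ] H, ‖c‖ ≤ M → spectrum ℝ c ⊆ Set.Icc (-M) M := by
      intro c hc t ht
      have := spectrum.norm_le_norm_of_mem ht
      rw [Real.norm_eq_abs] at this
      exact abs_le.1 (this.trans hc)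
    have hsa : spectrum ℝ a ⊆ Set.Icc (-M) M := hsubab a (le_max_left _ _)
    have hsb : spectrum ℝ b ⊆ Set.Icc (-M) M := hsubab b (le_max_right _ _)
    set ε' : ℝ := ε / (2 * (‖x‖ + 1)) with hε'
    have hε'pos : 0 < ε' := by positivity
    obtain ⟨q, hq⟩ := exists_polynomial_near_of_continuousOn (-M) M f
      (hf.continuousOn) ε' hε'pos
    have hcfc : ∀ c : H →L[ℂ] H, IsSelfAdjoint c → spectrum ℝ c ⊆ Set.Icc (-M) M →
        ‖cfc f c - aeval c q‖ ≤ ε' := by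
      intro c hc hspec
      rw [← cfc_polynomial q c, ← cfc_sub f q.eval c]
      refine norm_cfc_le hε'pos.le fun t ht => ?_
      have := hq t (hspec ht)
      rw [Real.norm_eq_abs, abs_sub_comm]
      exact (this).le
    have hdecomp : x * cfc f a - cfc f b * x
        = x * (cfc f a - aeval a q) - (cfc f b - aeval b q) * x := by
      rw [mul_sub, sub_mul, hpoly q]; abel
    rw [hdecomp]
    calc ‖x * (cfc f a - aeval a q) - (cfc f b - aeval b q) * x‖
        ≤ ‖x * (cfc f a - aeval a q)‖ + ‖(cfc f b - aeval b q) * x‖ := norm_sub_le _ _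
      _ ≤ ‖x‖ * ε' + ε' * ‖x‖ := by
          gcongr
          · exact (norm_mul_le _ _).trans (by gcongr; exact hcfc a ha hsa)
          · exact (norm_mul_le _ _).trans (by gcongr; exact hcfc b hb hsb)
      _ ≤ 0 + ε := by
          rw [hε', zero_add]
          have h1 : (0:ℝ) < ‖x‖ + 1 := by positivity
          have h2 : ‖x‖ * (ε / (2 * (‖x‖ + 1))) + ε / (2 * (‖x‖ + 1)) * ‖x‖
              = ε * (‖x‖ / (‖x‖ + 1)) := by field_simp; ring
          rw [h2]
          nlinarith [norm_nonneg x, div_le_one_of_le₀ (by linarith : ‖x‖ ≤ ‖x‖ + 1) h1.le]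
  have h0 : ‖x * cfc f a - cfc f b * x‖ ≤ 0 := le_of_forall_pos_le_add (by simpa using key)
  exact sub_eq_zero.1 (norm_le_zero_iff.1 h0)

private lemma gsum [Nontrivial H] {z : ℂ} (hz : ‖z‖ < 1) {P : H →L[ℂ] H} (hP : ‖P‖ ≤ 1)
    (k : ℕ) (u v : H →L[ℂ] H) :
    Summable fun n : ℕ => z ^ (n + k) • (u * (P ^ n * v)) := by
  have hPn : ∀ n : ℕ, ‖P ^ n‖ ≤ 1 := by
    intro n
    induction n with
    | zero => simp
    | succ n ih =>
      calc ‖P ^ (n+1)‖ = ‖P ^ n * P‖ := by rw [pow_succ]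
        _ ≤ ‖P ^ n‖ * ‖P‖ := norm_mul_le _ _
        _ ≤ 1 * 1 := mul_le_mul ih hP (norm_nonneg _) zero_le_one
        _ = 1 := one_mul 1
  refine Summable.of_norm_bounded (g := fun n => (‖z‖ ^ k * (‖u‖ * ‖v‖)) * ‖z‖ ^ n)
    ((summable_geometric_of_lt_one (norm_nonneg z) hz).mul_left _) fun n => ?_
  rw [norm_smul, norm_pow]
  calc ‖z‖ ^ (n + k) * ‖u * (P ^ n * v)‖ ≤ ‖z‖ ^ (n + k) * (‖u‖ * (1 * ‖v‖)) := by
        gcongr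
        calc ‖u * (P ^ n * v)‖ ≤ ‖u‖ * ‖P ^ n * v‖ := norm_mul_le _ _
          _ ≤ ‖u‖ * (‖P ^ n‖ * ‖v‖) := by gcongr; exact norm_mul_le _ _
          _ ≤ ‖u‖ * (1 * ‖v‖) := by gcongr; exact hPn n
    _ = (‖z‖ ^ k * (‖u‖ * ‖v‖)) * ‖z‖ ^ n := by rw [pow_add]; ring

private lemma gshift [Nontrivial H] {z : ℂ} (hz : ‖z‖ < 1) {P : H →L[ℂ] H} (hP : ‖P‖ ≤ 1)
    (k : ℕ) (u v : H →L[ℂ] H) :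
    ∑' n : ℕ, z ^ (n + k) • (u * (P ^ n * v)) =
      z ^ k • (u * v) + ∑' n : ℕ, z ^ (n + (k + 1)) • (u * (P ^ n * (P * v))) := by
  rw [Summable.tsum_eq_zero_add (gsum hz hP k u v)]
  congr 1
  · simp
  · exact tsum_congr fun n => by
      rw [show n + 1 + k = n + (k + 1) from by omega, pow_succ P n, mul_assoc]

private lemma gshift1 [Nontrivial H] {z : ℂ} (hz : ‖z‖ < 1) {P : H →L[ℂ] H} (hP : ‖P‖ ≤ 1)
    (u v : H →L[ℂ] H) :
    ∑' n : ℕ, z ^ (n + 1) • (u * (P ^ n * v)) =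
      z • (u * v) + ∑' n : ℕ, z ^ (n + 2) • (u * (P ^ n * (P * v))) := by
  simpa using gshift hz hP 1 u v

set_option maxHeartbeats 2000000

/-- If `(A₁,A₂)` and `(B₁,B₂)` are the fundamental operator pairs of a `Γ₃`-contraction
`(S₁,S₂,P)` and of its adjoint, satisfying the standard identities, then for every `z` in
the unit disc `(A₁* + A₂ z) Θ_{P*}(z) = Θ_{P*}(z) (B₁ + B₂* z)` on `𝒟_{P*}`, where
`Θ_{P*}(z) = -P* + ∑_{n ≥ 0} z^{n+1} D_P Pⁿ D_{P*}` is the characteristic function of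
`P*`. -/
theorem stmt18 (S₁ S₂ P D D' A₁ A₂ B₁ B₂ : H →L[ℂ] H)
    (hc12 : S₁ * S₂ = S₂ * S₁) (hc1P : S₁ * P = P * S₁) (hc2P : S₂ * P = P * S₂)
    (hP : ‖P‖ ≤ 1) (hD : D.IsPositive) (hD2 : D * D = 1 - adjoint P * P)
    (hD' : D'.IsPositive) (hD'2 : D' * D' = 1 - P * adjoint P)
    -- the fundamental equations for `(S₁,S₂,P)` and its adjoint
    (hA1 : S₁ - adjoint S₂ * P = D * A₁ * D)
    (hA2 : S₂ - adjoint S₁ * P = D * A₂ * D)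
    (hB1 : adjoint S₁ - S₂ * adjoint P = D' * B₁ * D')
    (hB2 : adjoint S₂ - S₁ * adjoint P = D' * B₂ * D')
    -- the standard identities `D_P S₁ = A₁ D_P + A₂* D_P P`, etc.
    (hF1 : D * S₁ = A₁ * D + adjoint A₂ * D * P)
    (hF2 : D * S₂ = A₂ * D + adjoint A₁ * D * P)
    (hG1 : D' * adjoint S₁ = B₁ * D' + adjoint B₂ * D' * adjoint P)
    (hG2 : D' * adjoint S₂ = B₂ * D' + adjoint B₁ * D' * adjoint P)
    -- `P Aᵢ = Bᵢ* P` on `Ran D_P`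
    (hint1 : P * A₁ * D = adjoint B₁ * P * D) (hint2 : P * A₂ * D = adjoint B₂ * P * D)
    -- `D_P A₁ = S₁ D_P - D_{P*} B₂ P` and `D_P A₂ = S₂ D_P - D_{P*} B₁ P` on `Ran D_P`
    (hlem1 : D * A₁ * D = (S₁ * D - D' * B₂ * P) * D)
    (hlem2 : D * A₂ * D = (S₂ * D - D' * B₁ * P) * D)
    -- `(A₁* D_P D_{P*} - A₂ P*) = D_P D_{P*} B₁ - P* B₂*` on `Ran D_{P*}`, and its twin
    (hlem3 : (adjoint A₁ * (D * D') - A₂ * adjoint P) * D' =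
      (D * D' * B₁ - adjoint P * adjoint B₂) * D')
    (hlem4 : (adjoint A₂ * (D * D') - A₁ * adjoint P) * D' =
      (D * D' * B₂ - adjoint P * adjoint B₁) * D') :
    ∀ z : ℂ, ‖z‖ < 1 →
      ∀ x ∈ defectSpace D',
        (adjoint A₁ + z • A₂)
            ((-(adjoint P) + ∑' n : ℕ, z ^ (n + 1) • (D ∘L (P ^ n) ∘L D')) x) =
          (-(adjoint P) + ∑' n : ℕ, z ^ (n + 1) • (D ∘L (P ^ n) ∘L D'))
            ((B₁ + z • adjoint B₂) x) := by
  rcases subsingleton_or_nontrivial H with hH | hH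
  · intro z hz x hx
    exact Subsingleton.elim _ _
  intro z hz
  simp only [← ContinuousLinearMap.mul_def]
  -- self-adjointness bookkeeping
  have hsaD : adjoint D = D := by rw [← star_eq_adjoint]; exact hD.isSelfAdjoint
  have hsaD' : adjoint D' = D' := by rw [← star_eq_adjoint]; exact hD'.isSelfAdjoint
  -- the intertwining relations `P D = D' P` and `D P* = P* D'`
  have hsq : P * (D * D) = (D' * D') * P := by rw [hD2, hD'2]; noncomm_ring
  have hsaDD : IsSelfAdjoint (D * D) := by
    show star (D * D) = D * D
    rw [star_mul, hD.isSelfAdjoint.star_eq]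
  have hsaDD' : IsSelfAdjoint (D' * D') := by
    show star (D' * D') = D' * D'
    rw [star_mul, hD'.isSelfAdjoint.star_eq]
  have hPD : P * D = D' * P := by
    have h := intertwine_cfc hsaDD hsaDD' hsq Real.continuous_sqrt
    rwa [cfc_sqrt_sq' D hD, cfc_sqrt_sq' D' hD'] at h
  have hDP : D * adjoint P = adjoint P * D' := by
    have h := congrArg star hPD
    simp only [star_mul, star_eq_adjoint, hsaD, hsaD'] at h
    exact h
  -- commutation with powers
  have hS2Pn : ∀ n : ℕ, S₂ * P ^ n = P ^ n * S₂ := fun n => Commute.pow_right hc2P n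
  have hc1Ps : adjoint S₁ * adjoint P = adjoint P * adjoint S₁ := by
    have h := congrArg star hc1P
    simp only [star_mul, star_eq_adjoint] at h
    exact h.symm
  -- adjoint forms of the fundamental equations
  have hB1' : D' * (B₁ * D') = adjoint S₁ - S₂ * adjoint P := by
    rw [← mul_assoc]; exact hB1.symm
  have hB2s : D' * (adjoint B₂ * D') = S₂ - P * adjoint S₁ := by
    have h := congrArg star hB2
    simp only [star_sub, star_mul, star_eq_adjoint, adjoint_adjoint, hsaD'] at h
    rw [← h]
  have hG1x : B₁ * D' = D' * adjoint S₁ - adjoint B₂ * (D' * adjoint P) := by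
    rw [hG1]; noncomm_ring
  have e2 : adjoint A₁ * D * P = D * S₂ - A₂ * D := by rw [hF2]; abel
  have hL1 : (adjoint A₁ * D) * (D' * D') - A₂ * (adjoint P * D') =
      D * (D' * (B₁ * D')) - adjoint P * (adjoint B₂ * D') := by
    calc (adjoint A₁ * D) * (D' * D') - A₂ * (adjoint P * D')
        = (adjoint A₁ * (D * D') - A₂ * adjoint P) * D' := by noncomm_ring
      _ = (D * D' * B₁ - adjoint P * adjoint B₂) * D' := hlem3
      _ = D * (D' * (B₁ * D')) - adjoint P * (adjoint B₂ * D') := by noncomm_ring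
  have hstar : adjoint A₁ * D = D * adjoint S₁ - adjoint P * (adjoint B₂ * D') := by
    have hL1x : (adjoint A₁ * D) * (D' * D') =
        D * (D' * (B₁ * D')) - adjoint P * (adjoint B₂ * D') + A₂ * (adjoint P * D') := by
      rw [← hL1]; abel
    calc adjoint A₁ * D
        = (adjoint A₁ * D) * (1 - P * adjoint P) + ((adjoint A₁ * D) * P) * adjoint P := by
          noncomm_ring
      _ = (adjoint A₁ * D) * (D' * D') + ((adjoint A₁ * D) * P) * adjoint P := by rw [← hD'2]
      _ = (D * (D' * (B₁ * D')) - adjoint P * (adjoint B₂ * D') + A₂ * (adjoint P * D'))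
          + (D * S₂ - A₂ * D) * adjoint P := by rw [hL1x, e2]
      _ = (D * (D' * (B₁ * D')) - adjoint P * (adjoint B₂ * D') + A₂ * (adjoint P * D'))
          + (D * (S₂ * adjoint P) - A₂ * (D * adjoint P)) := by noncomm_ring
      _ = (D * (D' * (B₁ * D')) - adjoint P * (adjoint B₂ * D') + A₂ * (adjoint P * D'))
          + (D * (S₂ * adjoint P) - A₂ * (adjoint P * D')) := by rw [hDP]
      _ = D * (D' * (B₁ * D') + S₂ * adjoint P) - adjoint P * (adjoint B₂ * D') := by
          noncomm_ring
      _ = D * ((adjoint S₁ - S₂ * adjoint P) + S₂ * adjoint P) - adjoint P * (adjoint B₂ * D') := by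
          rw [hB1']
      _ = D * adjoint S₁ - adjoint P * (adjoint B₂ * D') := by noncomm_ring
  have L0 : adjoint A₁ * (adjoint P * D') = adjoint P * (B₁ * D') := by
    calc adjoint A₁ * (adjoint P * D')
        = (adjoint A₁ * D) * adjoint P := by rw [← hDP]; noncomm_ring
      _ = (D * adjoint S₁ - adjoint P * (adjoint B₂ * D')) * adjoint P := by rw [hstar]
      _ = D * (adjoint S₁ * adjoint P) - adjoint P * (adjoint B₂ * (D' * adjoint P)) := by
          noncomm_ring
      _ = D * (adjoint P * adjoint S₁) - adjoint P * (adjoint B₂ * (D' * adjoint P)) := by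
          rw [hc1Ps]
      _ = (D * adjoint P) * adjoint S₁ - adjoint P * (adjoint B₂ * (D' * adjoint P)) := by
          noncomm_ring
      _ = (adjoint P * D') * adjoint S₁ - adjoint P * (adjoint B₂ * (D' * adjoint P)) := by
          rw [hDP]
      _ = adjoint P * (D' * adjoint S₁ - adjoint B₂ * (D' * adjoint P)) := by noncomm_ring
      _ = adjoint P * (B₁ * D') := by rw [← hG1x]
  -- the two tail identities
  have Ltail : ∀ n : ℕ,
      (adjoint A₁ * D) * (P ^ n * (P * (D' * D'))) + (A₂ * D) * (P ^ n * (D' * D'))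
        = D * (P ^ n * (S₂ * (D' * D'))) := by
    intro n
    have hPnP : P ^ n * (P * (D' * D')) = P * (P ^ n * (D' * D')) := by
      rw [← mul_assoc, ← pow_succ, pow_succ', mul_assoc]
    calc (adjoint A₁ * D) * (P ^ n * (P * (D' * D'))) + (A₂ * D) * (P ^ n * (D' * D'))
        = (A₂ * D + adjoint A₁ * D * P) * (P ^ n * (D' * D')) := by rw [hPnP]; noncomm_ring
      _ = (D * S₂) * (P ^ n * (D' * D')) := by rw [← hF2]
      _ = D * ((S₂ * P ^ n) * (D' * D')) := by noncomm_ring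
      _ = D * ((P ^ n * S₂) * (D' * D')) := by rw [hS2Pn n]
      _ = D * (P ^ n * (S₂ * (D' * D'))) := by rw [mul_assoc]
  have L3 : P * (D' * (B₁ * D')) + D' * (adjoint B₂ * D') = S₂ * (D' * D') := by
    calc P * (D' * (B₁ * D')) + D' * (adjoint B₂ * D')
        = P * (adjoint S₁ - S₂ * adjoint P) + (S₂ - P * adjoint S₁) := by rw [hB1', hB2s]
      _ = S₂ - (P * S₂) * adjoint P := by noncomm_ring
      _ = S₂ - (S₂ * P) * adjoint P := by rw [hc2P]
      _ = S₂ * (1 - P * adjoint P) := by noncomm_ring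
      _ = S₂ * (D' * D') := by rw [← hD'2]
  have Rtail : ∀ n : ℕ,
      D * (P ^ n * (P * (D' * (B₁ * D')))) + D * (P ^ n * (D' * (adjoint B₂ * D')))
        = D * (P ^ n * (S₂ * (D' * D'))) := by
    intro n
    calc D * (P ^ n * (P * (D' * (B₁ * D')))) + D * (P ^ n * (D' * (adjoint B₂ * D')))
        = D * (P ^ n * (P * (D' * (B₁ * D')) + D' * (adjoint B₂ * D'))) := by noncomm_ring
      _ = D * (P ^ n * (S₂ * (D' * D'))) := by rw [L3]
  -- the series
  set T : H →L[ℂ] H := ∑' n : ℕ, z ^ (n + 1) • (D * (P ^ n * D')) with hT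
  have hsF : Summable fun n : ℕ => z ^ (n + 1) • (D * (P ^ n * D')) := gsum hz hP 1 D D'
  have hLHS : ((adjoint A₁ + z • A₂) * (-(adjoint P) + T)) * D' =
      ((adjoint A₁ + z • A₂) * (-(adjoint P))) * D'
        + (z • ((adjoint A₁ * D) * (D' * D'))
          + ∑' n : ℕ, z ^ (n + 2) • (D * (P ^ n * (S₂ * (D' * D'))))) := by
    calc ((adjoint A₁ + z • A₂) * (-(adjoint P) + T)) * D'
        = ((adjoint A₁ + z • A₂) * (-(adjoint P))) * D'
          + ∑' n : ℕ, ((adjoint A₁ + z • A₂) * (z ^ (n + 1) • (D * (P ^ n * D')))) * D' := by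
          rw [hT, mul_add, add_mul, ← hsF.tsum_mul_left (adjoint A₁ + z • A₂),
            ← (hsF.mul_left (adjoint A₁ + z • A₂)).tsum_mul_right D']
      _ = ((adjoint A₁ + z • A₂) * (-(adjoint P))) * D'
          + ∑' n : ℕ, (z ^ (n + 1) • ((adjoint A₁ * D) * (P ^ n * (D' * D')))
              + z ^ (n + 2) • ((A₂ * D) * (P ^ n * (D' * D')))) := by
          congr 1
          exact tsum_congr fun n => by noncomm_ring; try module
      _ = ((adjoint A₁ + z • A₂) * (-(adjoint P))) * D'
          + ((∑' n : ℕ, z ^ (n + 1) • ((adjoint A₁ * D) * (P ^ n * (D' * D'))))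
            + ∑' n : ℕ, z ^ (n + 2) • ((A₂ * D) * (P ^ n * (D' * D')))) := by
          rw [Summable.tsum_add (gsum hz hP 1 _ _) (gsum hz hP 2 _ _)]
      _ = ((adjoint A₁ + z • A₂) * (-(adjoint P))) * D'
          + ((z • ((adjoint A₁ * D) * (D' * D'))
              + ∑' n : ℕ, z ^ (n + 2) • ((adjoint A₁ * D) * (P ^ n * (P * (D' * D')))))
            + ∑' n : ℕ, z ^ (n + 2) • ((A₂ * D) * (P ^ n * (D' * D')))) := by
          rw [gshift1 hz hP _ _]
      _ = ((adjoint A₁ + z • A₂) * (-(adjoint P))) * D'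
          + (z • ((adjoint A₁ * D) * (D' * D'))
            + ∑' n : ℕ, (z ^ (n + 2) • ((adjoint A₁ * D) * (P ^ n * (P * (D' * D'))))
                + z ^ (n + 2) • ((A₂ * D) * (P ^ n * (D' * D'))))) := by
          rw [add_assoc, ← Summable.tsum_add (gsum hz hP 2 _ _) (gsum hz hP 2 _ _)]
      _ = ((adjoint A₁ + z • A₂) * (-(adjoint P))) * D'
          + (z • ((adjoint A₁ * D) * (D' * D'))
            + ∑' n : ℕ, z ^ (n + 2) • (D * (P ^ n * (S₂ * (D' * D'))))) := by
          congr 2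
          exact tsum_congr fun n => by rw [← smul_add, Ltail n]
  have hRHS : ((-(adjoint P) + T) * (B₁ + z • adjoint B₂)) * D' =
      ((-(adjoint P)) * (B₁ + z • adjoint B₂)) * D'
        + (z • (D * (D' * (B₁ * D')))
          + ∑' n : ℕ, z ^ (n + 2) • (D * (P ^ n * (S₂ * (D' * D'))))) := by
    calc ((-(adjoint P) + T) * (B₁ + z • adjoint B₂)) * D'
        = ((-(adjoint P)) * (B₁ + z • adjoint B₂)) * D'
          + ∑' n : ℕ, ((z ^ (n + 1) • (D * (P ^ n * D'))) * (B₁ + z • adjoint B₂)) * D' := by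
          rw [hT, add_mul, add_mul, ← hsF.tsum_mul_right (B₁ + z • adjoint B₂),
            ← (hsF.mul_right (B₁ + z • adjoint B₂)).tsum_mul_right D']
      _ = ((-(adjoint P)) * (B₁ + z • adjoint B₂)) * D'
          + ∑' n : ℕ, (z ^ (n + 1) • (D * (P ^ n * (D' * (B₁ * D'))))
              + z ^ (n + 2) • (D * (P ^ n * (D' * (adjoint B₂ * D'))))) := by
          congr 1
          exact tsum_congr fun n => by noncomm_ring; try module
      _ = ((-(adjoint P)) * (B₁ + z • adjoint B₂)) * D'
          + ((∑' n : ℕ, z ^ (n + 1) • (D * (P ^ n * (D' * (B₁ * D')))))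
            + ∑' n : ℕ, z ^ (n + 2) • (D * (P ^ n * (D' * (adjoint B₂ * D'))))) := by
          rw [Summable.tsum_add (gsum hz hP 1 _ _) (gsum hz hP 2 _ _)]
      _ = ((-(adjoint P)) * (B₁ + z • adjoint B₂)) * D'
          + ((z • (D * (D' * (B₁ * D')))
              + ∑' n : ℕ, z ^ (n + 2) • (D * (P ^ n * (P * (D' * (B₁ * D'))))))
            + ∑' n : ℕ, z ^ (n + 2) • (D * (P ^ n * (D' * (adjoint B₂ * D'))))) := by
          rw [gshift1 hz hP _ _]
      _ = ((-(adjoint P)) * (B₁ + z • adjoint B₂)) * D'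
          + (z • (D * (D' * (B₁ * D')))
            + ∑' n : ℕ, (z ^ (n + 2) • (D * (P ^ n * (P * (D' * (B₁ * D')))))
                + z ^ (n + 2) • (D * (P ^ n * (D' * (adjoint B₂ * D')))))) := by
          rw [add_assoc, ← Summable.tsum_add (gsum hz hP 2 _ _) (gsum hz hP 2 _ _)]
      _ = ((-(adjoint P)) * (B₁ + z • adjoint B₂)) * D'
          + (z • (D * (D' * (B₁ * D')))
            + ∑' n : ℕ, z ^ (n + 2) • (D * (P ^ n * (S₂ * (D' * D'))))) := by
          congr 2
          exact tsum_congr fun n => by rw [← smul_add, Rtail n]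
  have hconst : ((adjoint A₁ + z • A₂) * (-(adjoint P))) * D'
        + z • ((adjoint A₁ * D) * (D' * D'))
      = ((-(adjoint P)) * (B₁ + z • adjoint B₂)) * D' + z • (D * (D' * (B₁ * D'))) := by
    have h1 : z • ((adjoint A₁ * D) * (D' * D')) - z • (A₂ * (adjoint P * D'))
        = z • (D * (D' * (B₁ * D'))) - z • (adjoint P * (adjoint B₂ * D')) := by
      rw [← smul_sub, ← smul_sub, hL1]
    calc ((adjoint A₁ + z • A₂) * (-(adjoint P))) * D' + z • ((adjoint A₁ * D) * (D' * D'))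
        = -(adjoint A₁ * (adjoint P * D'))
          + (z • ((adjoint A₁ * D) * (D' * D')) - z • (A₂ * (adjoint P * D'))) := by
          noncomm_ring
          try module
      _ = -(adjoint P * (B₁ * D'))
          + (z • (D * (D' * (B₁ * D'))) - z • (adjoint P * (adjoint B₂ * D'))) := by
          rw [L0, h1]
      _ = ((-(adjoint P)) * (B₁ + z • adjoint B₂)) * D' + z • (D * (D' * (B₁ * D'))) := by
          noncomm_ring
          try module
  have KEYop : ((adjoint A₁ + z • A₂) * (-(adjoint P) + T)) * D'
      = ((-(adjoint P) + T) * (B₁ + z • adjoint B₂)) * D' := by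
    rw [hLHS, hRHS, ← add_assoc, ← add_assoc, hconst]
  -- extend from the range of `D'` to its closure
  intro x hx
  have hx' : x ∈ closure ((LinearMap.range (D' : H →ₗ[ℂ] H) : Submodule ℂ H) : Set H) := by
    rw [← Submodule.topologicalClosure_coe]
    exact hx
  have heq : Set.EqOn (fun y => (adjoint A₁ + z • A₂) ((-(adjoint P) + T) y))
      (fun y => (-(adjoint P) + T) ((B₁ + z • adjoint B₂) y))
      ((LinearMap.range (D' : H →ₗ[ℂ] H) : Submodule ℂ H) : Set H) := by
    rintro y ⟨w, rfl⟩
    have h := congrArg (fun O : H →L[ℂ] H => O w) KEYop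
    simpa [ContinuousLinearMap.mul_apply] using h
  exact heq.closure (by fun_prop) (by fun_prop) hx'
end
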